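/- arXiv:0903.3704 — 4 statements merged into one kernel-verified Lean document; each statement's English description precedes it below -/
import Mathlib

section
/- Let τ be a recurrent renewal process on ℕ with inter-arrival law K and let Z_N(β,h) = E[ exp( (h+β²/2)·∑_{n=1}^N δ_n + β² ∑_{1≤i<j≤N} ρ_{j−i} δ_i δ_j )·δ_N ], where δ_n = 1_{n∈τ} and ρ has finite range q. Then there exists a constant C depending only on ρ and q such that Z_{N+M}(β,h) ≥ e^{Cβ²} Z_N(β,h) Z_M(β,h) for all N, M ≥ 1. -/
open scoped Classical
open MeasureTheory ProbabilityTheory Filter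

/-- `renewalδ T n x = 1` iff `n` is a renewal point of the trajectory `x`
(i.e. a partial sum of the inter-arrival times `T`). -/
noncomputable def renewalδ {Ω : Type*} (T : ℕ → Ω → ℕ) (n : ℕ) (x : Ω) : ℝ :=
  if ∃ m : ℕ, ∑ k ∈ Finset.range m, T k x = n then 1 else 0

/-- The constrained annealed partition function of the pinning model with
correlation function `ρ`. -/
noncomputable def Zfun {Ω : Type*} [MeasurableSpace Ω] (P : Measure Ω)
    (T : ℕ → Ω → ℕ) (ρ : ℕ → ℝ) (β h : ℝ) (N : ℕ) : ℝ :=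
  ∫ x, Real.exp ((h + β ^ 2 / 2) * ∑ n ∈ Finset.Icc 1 N, renewalδ T n x
      + β ^ 2 * ∑ i ∈ Finset.Icc 1 N, ∑ j ∈ Finset.Icc (i + 1) N,
          ρ (j - i) * renewalδ T i x * renewalδ T j x) * renewalδ T N x ∂P

/-!
On the event `N ∈ τ`, the Hamiltonian of `[1, N + M]` is the Hamiltonian of `[1, N]` plus that of
the shifted configuration on `[1, M]` plus `β²` times the cross term
`∑_{i ≤ N < j} ρ (j - i) δ_i δ_j`. Since `ρ` has range `q`, only the at most `q²` pairs with
`j - i ≤ q` contribute, so the cross term is at least `-q² ∑_{k ≤ q} |ρ k|`.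
Splitting `{N ∈ τ}` according to the index `m` with `S_m = N` (unique, as `K 0 = 0` makes the
inter-arrival times almost surely positive), the weight of `[1, N]` is a function
of `T_0, …, T_{m-1}` and, by regeneration, the weight of the shifted block is the same function of
`T_m, …, T_{m+M-1}` as the weight of `[1, M]` is of `T_0, …, T_{M-1}`. Independence and
stationarity of the inter-arrival times then turn the expectation of the product into
`Z_N Z_M`.
-/

namespace RenewalPinning

open Finset

lemma sum_Ioc_add_left {M : Type*} [AddCommMonoid M] (f : ℕ → M) (N a b : ℕ) :
    ∑ n ∈ Ioc (N + a) (N + b), f n = ∑ n ∈ Ioc a b, f (N + n) := by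
  rw [← map_add_left_Ioc, sum_map]
  rfl

section Renewal

def partialSum (u : ℕ → ℕ) (r : ℕ) : ℕ := ∑ k ∈ range r, u k

noncomputable def renewalIndicator (u : ℕ → ℕ) : ℕ → ℝ :=
  (Set.range (partialSum u)).indicator 1

-- Only `u 0, …, u (c - 1)` enter here, so independence arguments apply to it.
noncomputable def renewalIndicatorUpTo (u : ℕ → ℕ) (c : ℕ) : ℕ → ℝ :=
  (partialSum u '' Set.Iic c).indicator 1

variable {u : ℕ → ℕ}

lemma partialSum_add (u : ℕ → ℕ) (m s : ℕ) :
    partialSum u (m + s) = partialSum u m + partialSum (fun k => u (m + k)) s :=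
  sum_range_add u m s

lemma partialSum_strictMono (hu : ∀ k, 0 < u k) : StrictMono (partialSum u) :=
  strictMono_nat_of_lt_succ fun r => by
    simpa only [partialSum, sum_range_succ] using Nat.lt_add_of_pos_right (hu r)

lemma dependsOn_partialSum (r : ℕ) :
    DependsOn (fun u : ℕ → ℕ => partialSum u r) ↑(range r) :=
  fun _ _ h => sum_congr rfl fun k hk => h k hk

lemma dependsOn_renewalIndicatorUpTo (c : ℕ) :
    DependsOn (fun u : ℕ → ℕ => renewalIndicatorUpTo u c) ↑(range c) := by
  intro u v h
  have : partialSum u '' Set.Iic c = partialSum v '' Set.Iic c :=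
    Set.image_congr fun r hr => dependsOn_partialSum r fun k hk =>
      h k (by simp only [coe_range, Set.mem_Iio, Set.mem_Iic] at hk hr ⊢; omega)
  simp only [renewalIndicatorUpTo, this]

lemma renewalIndicatorUpTo_eq (hu : ∀ k, 0 < u k) {c n : ℕ} (hn : n ≤ partialSum u c) :
    renewalIndicatorUpTo u c n = renewalIndicator u n := by
  have : n ∈ partialSum u '' Set.Iic c ↔ n ∈ Set.range (partialSum u) :=
    ⟨fun ⟨r, _, hr⟩ => ⟨r, hr⟩, fun ⟨r, hr⟩ =>
      ⟨r, (partialSum_strictMono hu).le_iff_le.1 (hr ▸ hn), hr⟩⟩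
  simp only [renewalIndicatorUpTo, renewalIndicator, Set.indicator_apply, this]

lemma renewalIndicator_add (hu : ∀ k, 0 < u k) {m N : ℕ} (hm : partialSum u m = N) (j : ℕ) :
    renewalIndicator u (N + j) = renewalIndicator (fun k => u (m + k)) j := by
  have : N + j ∈ Set.range (partialSum u) ↔ j ∈ Set.range (partialSum fun k => u (m + k)) := by
    constructor
    · rintro ⟨r, hr⟩
      obtain ⟨s, rfl⟩ := Nat.exists_eq_add_of_le
        ((partialSum_strictMono hu).le_iff_le.1 (by omega : partialSum u m ≤ partialSum u r))
      exact ⟨s, by rw [partialSum_add] at hr; omega⟩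
    · rintro ⟨s, hs⟩
      exact ⟨m + s, by rw [partialSum_add, hm, hs]⟩
  simp only [renewalIndicator, Set.indicator_apply, this, Pi.one_apply]

lemma sum_ite_partialSum_eq (hu : ∀ k, 0 < u k) (N : ℕ) (a : ℝ) :
    ∑ m ∈ range (N + 1), (if partialSum u m = N then a else 0)
      = if N ∈ Set.range (partialSum u) then a else 0 := by
  split_ifs with hN
  · obtain ⟨m₀, hm₀⟩ := hN
    have hm₀N : m₀ ≤ N := hm₀ ▸ (partialSum_strictMono hu).id_le m₀
    rw [sum_eq_single_of_mem m₀ (mem_range.2 (by omega)) fun m _ hm => ?_, if_pos hm₀]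
    exact if_neg fun h => hm ((partialSum_strictMono hu).injective (h.trans hm₀.symm))
  · exact sum_eq_zero fun m _ => if_neg fun h => hN ⟨m, h⟩

lemma indicator_one_mem_Icc (s : Set ℕ) (n : ℕ) : s.indicator (1 : ℕ → ℝ) n ∈ Set.Icc 0 1 := by
  by_cases hn : n ∈ s <;> simp [hn]

end Renewal

section Hamiltonian

variable (ρ : ℕ → ℝ) (β h : ℝ)

noncomputable def hamiltonian (N : ℕ) (d : ℕ → ℝ) : ℝ :=
  (h + β ^ 2 / 2) * ∑ n ∈ Icc 1 N, d n
    + β ^ 2 * ∑ i ∈ Icc 1 N, ∑ j ∈ Icc (i + 1) N, ρ (j - i) * d i * d j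

noncomputable def weight (N : ℕ) (d : ℕ → ℝ) : ℝ := Real.exp (hamiltonian ρ β h N d) * d N

noncomputable def hamiltonianBound (N : ℕ) : ℝ :=
  |h + β ^ 2 / 2| * N + β ^ 2 * ∑ i ∈ Icc 1 N, ∑ j ∈ Icc (i + 1) N, |ρ (j - i)|

variable {ρ β h}

lemma hamiltonian_congr {N : ℕ} {d d' : ℕ → ℝ} (hdd' : ∀ n ≤ N, d n = d' n) :
    hamiltonian ρ β h N d = hamiltonian ρ β h N d' := by
  unfold hamiltonian
  congr 2
  · exact sum_congr rfl fun n hn => hdd' n (mem_Icc.1 hn).2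
  · refine sum_congr rfl fun i hi => sum_congr rfl fun j hj => ?_
    rw [hdd' i (mem_Icc.1 hi).2, hdd' j (mem_Icc.1 hj).2]

lemma weight_congr {N : ℕ} {d d' : ℕ → ℝ} (hdd' : ∀ n ≤ N, d n = d' n) :
    weight ρ β h N d = weight ρ β h N d' := by
  rw [weight, weight, hamiltonian_congr hdd', hdd' N le_rfl]

lemma hamiltonian_add (N M : ℕ) (d : ℕ → ℝ) :
    hamiltonian ρ β h (N + M) d
      = hamiltonian ρ β h N d + hamiltonian ρ β h M (fun j => d (N + j))
        + β ^ 2 * ∑ i ∈ Ioc 0 N, ∑ j ∈ Ioc N (N + M), ρ (j - i) * d i * d j := by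
  have hIcc : ∀ a b : ℕ, Icc (a + 1) b = Ioc a b := Finset.Icc_add_one_left_eq_Ioc
  have hIcc₁ : ∀ b : ℕ, Icc 1 b = Ioc 0 b := hIcc 0
  have hsplit (f : ℕ → ℝ) {a : ℕ} (ha : a ≤ N) :
      ∑ n ∈ Ioc a (N + M), f n = ∑ n ∈ Ioc a N, f n + ∑ n ∈ Ioc 0 M, f (N + n) := by
    rw [← sum_Ioc_consecutive f ha (Nat.le_add_right N M), ← sum_Ioc_add_left f N 0 M, add_zero]
  have hlower : ∑ i ∈ Ioc 0 N, ∑ j ∈ Ioc i (N + M), ρ (j - i) * d i * d j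
      = ∑ i ∈ Ioc 0 N, ∑ j ∈ Ioc i N, ρ (j - i) * d i * d j
        + ∑ i ∈ Ioc 0 N, ∑ j ∈ Ioc N (N + M), ρ (j - i) * d i * d j := by
    rw [← sum_add_distrib]
    exact sum_congr rfl fun i hi =>
      (sum_Ioc_consecutive _ (mem_Ioc.1 hi).2 (Nat.le_add_right N M)).symm
  have hupper : ∑ i ∈ Ioc 0 M, ∑ j ∈ Ioc (N + i) (N + M), ρ (j - (N + i)) * d (N + i) * d j
      = ∑ i ∈ Ioc 0 M, ∑ j ∈ Ioc i M, ρ (j - i) * d (N + i) * d (N + j) := by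
    simp only [sum_Ioc_add_left, Nat.add_sub_add_left]
  simp only [hamiltonian, hIcc₁, hIcc]
  rw [hsplit _ (Nat.zero_le N), hsplit _ (Nat.zero_le N), hlower, hupper]
  ring

lemma abs_mul_mul_le_abs (x : ℝ) {a b : ℝ} (ha : a ∈ Set.Icc 0 1) (hb : b ∈ Set.Icc 0 1) :
    |x * a * b| ≤ |x| := by
  rw [abs_mul, abs_mul, abs_of_nonneg ha.1, abs_of_nonneg hb.1, mul_assoc]
  exact mul_le_of_le_one_right (abs_nonneg x) (mul_le_one₀ ha.2 hb.1 hb.2)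

lemma neg_le_sum_cross {q : ℕ} (hρ : ∀ k, q < k → ρ k = 0) {d : ℕ → ℝ}
    (hd : ∀ n, d n ∈ Set.Icc 0 1) (N M : ℕ) :
    -((q : ℝ) ^ 2 * ∑ k ∈ range (q + 1), |ρ k|)
      ≤ ∑ i ∈ Ioc 0 N, ∑ j ∈ Ioc N (N + M), ρ (j - i) * d i * d j := by
  set R := ∑ k ∈ range (q + 1), |ρ k|
  have hρR (k : ℕ) : |ρ k| ≤ R := by
    by_cases hk : k ≤ q
    · exact single_le_sum (fun k _ => abs_nonneg (ρ k)) (mem_range.2 (Nat.lt_succ_of_le hk))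
    · rw [hρ k (not_le.1 hk), abs_zero]
      exact sum_nonneg fun k _ => abs_nonneg (ρ k)
  -- only the at most `q ^ 2` pairs `i ≤ N < j` with `j - i ≤ q` interact
  have hpairs : #{p ∈ Ioc 0 N ×ˢ Ioc N (N + M) | p.2 - p.1 ≤ q} ≤ q ^ 2 := calc
    _ ≤ #(Ioc (N - q) N ×ˢ Ioc N (N + q)) := card_le_card fun p hp => by
        simp only [mem_filter, mem_product, mem_Ioc] at hp ⊢; omega
    _ ≤ q ^ 2 := by
        rw [card_product, Nat.card_Ioc, Nat.card_Ioc, sq]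
        exact Nat.mul_le_mul (by omega) (by omega)
  have habs : ∑ p ∈ Ioc 0 N ×ˢ Ioc N (N + M), |ρ (p.2 - p.1)| ≤ (q : ℝ) ^ 2 * R := by
    rw [← sum_filter_of_ne (p := fun p => p.2 - p.1 ≤ q) fun p _ hp => by
      by_contra hq; exact hp (by rw [hρ _ (not_le.1 hq), abs_zero])]
    calc _ ≤ #{p ∈ Ioc 0 N ×ˢ Ioc N (N + M) | p.2 - p.1 ≤ q} • R :=
          sum_le_card_nsmul _ _ _ fun p _ => hρR _
      _ ≤ (q : ℝ) ^ 2 * R := by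
          rw [nsmul_eq_mul]
          exact mul_le_mul_of_nonneg_right (by exact_mod_cast hpairs)
            (sum_nonneg fun k _ => abs_nonneg (ρ k))
  rw [← sum_product']
  refine le_trans (neg_le_neg habs) ?_
  rw [← sum_neg_distrib]
  exact sum_le_sum fun p _ => neg_le_of_abs_le (abs_mul_mul_le_abs _ (hd _) (hd _))

lemma weight_mul_weight_shift_le {q : ℕ} (hρ : ∀ k, q < k → ρ k = 0) {d : ℕ → ℝ}
    (hd : ∀ n, d n ∈ Set.Icc 0 1) (N M : ℕ) :
    Real.exp (-((q : ℝ) ^ 2 * ∑ k ∈ range (q + 1), |ρ k|) * β ^ 2)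
        * (weight ρ β h N d * weight ρ β h M (fun j => d (N + j)))
      ≤ weight ρ β h (N + M) d := by
  have hH : -((q : ℝ) ^ 2 * ∑ k ∈ range (q + 1), |ρ k|) * β ^ 2
      + (hamiltonian ρ β h N d + hamiltonian ρ β h M (fun j => d (N + j)))
      ≤ hamiltonian ρ β h (N + M) d := by
    rw [hamiltonian_add]
    nlinarith [mul_le_mul_of_nonneg_left (neg_le_sum_cross hρ hd N M) (sq_nonneg β)]
  calc _ = Real.exp (-((q : ℝ) ^ 2 * ∑ k ∈ range (q + 1), |ρ k|) * β ^ 2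
          + (hamiltonian ρ β h N d + hamiltonian ρ β h M (fun j => d (N + j))))
          * d (N + M) * d N := by
        rw [weight, weight, Real.exp_add, Real.exp_add]; ring
    _ ≤ Real.exp (hamiltonian ρ β h (N + M) d) * d (N + M) * 1 :=
        mul_le_mul (mul_le_mul_of_nonneg_right (Real.exp_le_exp.2 hH) (hd _).1) (hd N).2
          (hd N).1 (mul_nonneg (Real.exp_nonneg _) (hd _).1)
    _ = _ := mul_one _

lemma hamiltonian_le {d : ℕ → ℝ} (hd : ∀ n, d n ∈ Set.Icc 0 1) (N : ℕ) :
    hamiltonian ρ β h N d ≤ hamiltonianBound ρ β h N := by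
  have hsum : ∑ n ∈ Icc 1 N, d n ∈ Set.Icc 0 (N : ℝ) :=
    ⟨sum_nonneg fun n _ => (hd n).1,
      (sum_le_sum fun n _ => (hd n).2).trans (by simp)⟩
  unfold hamiltonian hamiltonianBound
  gcongr ?_ + β ^ 2 * ?_
  · exact (mul_le_mul_of_nonneg_right (le_abs_self _) hsum.1).trans
      (mul_le_mul_of_nonneg_left hsum.2 (abs_nonneg _))
  · exact sum_le_sum fun i _ => sum_le_sum fun j _ =>
      (le_abs_self _).trans (abs_mul_mul_le_abs _ (hd i) (hd j))

lemma weight_mem_Icc {d : ℕ → ℝ} (hd : ∀ n, d n ∈ Set.Icc 0 1) (N : ℕ) :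
    weight ρ β h N d ∈ Set.Icc 0 (Real.exp (hamiltonianBound ρ β h N)) :=
  ⟨mul_nonneg (Real.exp_nonneg _) (hd N).1,
    (mul_le_of_le_one_right (Real.exp_nonneg _) (hd N).2).trans
      (Real.exp_le_exp.2 (hamiltonian_le hd N))⟩

end Hamiltonian

section Blocks

variable (ρ β h)

noncomputable def weightUpTo (N c : ℕ) (u : ℕ → ℕ) : ℝ :=
  weight ρ β h N (renewalIndicatorUpTo u c)

noncomputable def weightAtEpoch (N m : ℕ) (u : ℕ → ℕ) : ℝ :=
  if partialSum u m = N then weightUpTo ρ β h N m u else 0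

variable {ρ β h} {u : ℕ → ℕ}

lemma dependsOn_weightUpTo (N c : ℕ) : DependsOn (weightUpTo ρ β h N c) ↑(range c) :=
  fun _ _ huv => congrArg (weight ρ β h N) (dependsOn_renewalIndicatorUpTo c huv)

lemma dependsOn_weightAtEpoch (N m : ℕ) : DependsOn (weightAtEpoch ρ β h N m) ↑(range m) :=
  fun _ _ huv => by
    simp only [weightAtEpoch, dependsOn_partialSum m huv, dependsOn_weightUpTo N m huv]

lemma abs_weightUpTo_le (N c : ℕ) (u : ℕ → ℕ) :
    |weightUpTo ρ β h N c u| ≤ Real.exp (hamiltonianBound ρ β h N) :=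
  have hw := weight_mem_Icc (ρ := ρ) (β := β) (h := h) (indicator_one_mem_Icc _) N
  (abs_of_nonneg hw.1).trans_le hw.2

lemma abs_weightAtEpoch_le (N m : ℕ) (u : ℕ → ℕ) :
    |weightAtEpoch ρ β h N m u| ≤ Real.exp (hamiltonianBound ρ β h N) := by
  unfold weightAtEpoch
  split_ifs
  exacts [abs_weightUpTo_le N m u, abs_zero.trans_le (Real.exp_nonneg _)]

lemma weightUpTo_eq (hu : ∀ k, 0 < u k) {N c : ℕ} (hN : N ≤ partialSum u c) :
    weightUpTo ρ β h N c u = weight ρ β h N (renewalIndicator u) :=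
  weight_congr fun _ hn => renewalIndicatorUpTo_eq hu (hn.trans hN)

lemma weightUpTo_self (hu : ∀ k, 0 < u k) (N : ℕ) :
    weightUpTo ρ β h N N u = weight ρ β h N (renewalIndicator u) :=
  weightUpTo_eq hu ((partialSum_strictMono hu).id_le N)

lemma weightAtEpoch_eq (hu : ∀ k, 0 < u k) (N m : ℕ) :
    weightAtEpoch ρ β h N m u
      = if partialSum u m = N then weight ρ β h N (renewalIndicator u) else 0 := by
  unfold weightAtEpoch
  split_ifs with hm
  exacts [weightUpTo_eq hu hm.ge, rfl]

lemma sum_weightAtEpoch (hu : ∀ k, 0 < u k) (N : ℕ) :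
    ∑ m ∈ range (N + 1), weightAtEpoch ρ β h N m u = weight ρ β h N (renewalIndicator u) := by
  simp only [weightAtEpoch_eq hu, sum_ite_partialSum_eq hu]
  split_ifs with hN
  · rfl
  · simp [weight, renewalIndicator, hN]

lemma sum_weightAtEpoch_mul_le {q : ℕ} (hρ : ∀ k, q < k → ρ k = 0) (hu : ∀ k, 0 < u k)
    (N M : ℕ) :
    Real.exp (-((q : ℝ) ^ 2 * ∑ k ∈ range (q + 1), |ρ k|) * β ^ 2)
        * ∑ m ∈ range (N + 1),
          weightAtEpoch ρ β h N m u * weightUpTo ρ β h M M (fun k => u (m + k))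
      ≤ weightUpTo ρ β h (N + M) (N + M) u := by
  have hterm (m : ℕ) :
      weightAtEpoch ρ β h N m u * weightUpTo ρ β h M M (fun k => u (m + k))
        = if partialSum u m = N then weight ρ β h N (renewalIndicator u)
            * weight ρ β h M (fun j => renewalIndicator u (N + j)) else 0 := by
    rw [weightAtEpoch_eq hu, weightUpTo_self fun k => hu (m + k)]
    split_ifs with hm
    · simp only [renewalIndicator_add hu hm]
    · exact zero_mul _
  have hd := indicator_one_mem_Icc (Set.range (partialSum u))
  simp only [hterm, sum_ite_partialSum_eq hu, weightUpTo_self hu]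
  refine le_trans ?_ (weight_mul_weight_shift_le hρ hd N M)
  gcongr
  split_ifs
  exacts [le_rfl, mul_nonneg (weight_mem_Icc hd N).1 (weight_mem_Icc (fun _ => hd _) M).1]

end Blocks

section IIDSequence

variable {Ω α : Type*} [MeasurableSpace Ω] [MeasurableSpace α] {P : Measure Ω}

lemma map_shift_eq_map [IsProbabilityMeasure P] {T : ℕ → Ω → α} (hmeas : ∀ i, Measurable (T i))
    (hindep : iIndepFun T P) (hident : ∀ i, P.map (T i) = P.map (T 0)) (m : ℕ) :
    P.map (fun x k => T (m + k) x) = P.map (fun x k => T k x) := by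
  have hmarginal (m : ℕ) (I : Finset ℕ) :
      P.map (fun x => I.restrict fun k => T (m + k) x) = Measure.pi fun _ : I => P.map (T 0) := by
    rw [show (fun x => I.restrict fun k => T (m + k) x) = fun x (i : I) => T (m + i) x from rfl,
      (hindep.precomp (g := fun i : I => m + (i : ℕ)) fun i j hij =>
        Subtype.ext (Nat.add_left_cancel hij)).map_fun_eq_pi_map fun i => (hmeas _).aemeasurable]
    simp only [hident]
  rw [map_eq_iff_forall_finset_map_restrict_eq
    (measurable_pi_lambda _ fun k => hmeas (m + k)).aemeasurable
    (measurable_pi_lambda _ hmeas).aemeasurable]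
  exact fun I => by simpa using (hmarginal m I).trans (hmarginal 0 I).symm

lemma integral_comp_shift [IsProbabilityMeasure P] {T : ℕ → Ω → α}
    (hmeas : ∀ i, Measurable (T i)) (hindep : iIndepFun T P)
    (hident : ∀ i, P.map (T i) = P.map (T 0)) {g : (ℕ → α) → ℝ} (hg : Measurable g) (m : ℕ) :
    ∫ x, g (fun k => T (m + k) x) ∂P = ∫ x, g (fun k => T k x) ∂P := by
  rw [← integral_map (measurable_pi_lambda _ fun k => hmeas (m + k)).aemeasurable
      hg.aestronglyMeasurable, map_shift_eq_map hmeas hindep hident,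
    integral_map (measurable_pi_lambda _ hmeas).aemeasurable hg.aestronglyMeasurable]

variable [Countable α] [MeasurableSingletonClass α]

lemma _root_.DependsOn.measurable_of_countable {ι β : Type*} [MeasurableSpace β] [Nonempty β]
    {f : (ι → α) → β} {S : Set ι} [Finite S] (hf : DependsOn f S) : Measurable f := by
  obtain ⟨g, rfl⟩ := dependsOn_iff_exists_comp.1 hf
  exact (_root_.measurable_of_countable g).comp
    (measurable_pi_lambda _ fun i => measurable_pi_apply _)

lemma integrable_of_dependsOn [IsFiniteMeasure P] {ι : Type*} {T : ι → Ω → α}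
    (hmeas : ∀ i, Measurable (T i)) {f : (ι → α) → ℝ} {S : Set ι} [Finite S]
    (hf : DependsOn f S) {C : ℝ} (hC : ∀ u, |f u| ≤ C) :
    Integrable (fun x => f fun i => T i x) P :=
  .of_bound (hf.measurable_of_countable.comp (measurable_pi_lambda _ hmeas)).aestronglyMeasurable
    C (ae_of_all _ fun _ => hC _)

lemma _root_.ProbabilityTheory.iIndepFun.indepFun_of_dependsOn {ι β γ : Type*}
    [MeasurableSpace β] [MeasurableSpace γ] [Nonempty β] [Nonempty γ] {T : ι → Ω → α}
    (hmeas : ∀ i, Measurable (T i)) (hindep : iIndepFun T P) {f : (ι → α) → β}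
    {g : (ι → α) → γ} {S S' : Finset ι} (hf : DependsOn f ↑S) (hg : DependsOn g ↑S')
    (hSS' : Disjoint S S') :
    IndepFun (fun x => f fun i => T i x) (fun x => g fun i => T i x) P := by
  obtain ⟨f', rfl⟩ := dependsOn_iff_exists_comp.1 hf
  obtain ⟨g', rfl⟩ := dependsOn_iff_exists_comp.1 hg
  exact (hindep.indepFun_finset S S' hSS' hmeas).comp (measurable_of_countable f')
    (measurable_of_countable g')

lemma integral_mul_comp_shift [IsProbabilityMeasure P] {T : ℕ → Ω → α}
    (hmeas : ∀ i, Measurable (T i)) (hindep : iIndepFun T P)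
    (hident : ∀ i, P.map (T i) = P.map (T 0)) {f g : (ℕ → α) → ℝ} {m M : ℕ}
    (hf : DependsOn f ↑(range m)) (hg : DependsOn g ↑(range M)) :
    ∫ x, f (fun k => T k x) * g (fun k => T (m + k) x) ∂P
      = (∫ x, f (fun k => T k x) ∂P) * ∫ x, g (fun k => T k x) ∂P := by
  have hg' : DependsOn (fun u : ℕ → α => g fun k => u (m + k)) ↑(Ico m (m + M)) :=
    fun u v huv => hg fun k hk => huv (m + k) (by simp_all)
  have hdisj : Disjoint (range m) (Ico m (m + M)) := by
    rw [range_eq_Ico]; exact Ico_disjoint_Ico_consecutive 0 m (m + M)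
  rw [(hindep.indepFun_of_dependsOn hmeas hf hg' hdisj).integral_fun_mul_eq_mul_integral
      (hf.measurable_of_countable.comp (measurable_pi_lambda _ hmeas)).aestronglyMeasurable
      (hg.measurable_of_countable.comp
        (measurable_pi_lambda _ fun k => hmeas (m + k))).aestronglyMeasurable,
    integral_comp_shift hmeas hindep hident hg.measurable_of_countable]

end IIDSequence

section PartitionFunction

variable {Ω : Type*} [MeasurableSpace Ω] {P : Measure Ω} {T : ℕ → Ω → ℕ} {ρ : ℕ → ℝ} {β h : ℝ}

lemma ae_forall_pos (hmeas : ∀ i, Measurable (T i)) (hident : ∀ i, P.map (T i) = P.map (T 0))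
    (h0 : P (T 0 ⁻¹' {0}) = 0) : ∀ᵐ x ∂P, ∀ k, 0 < T k x := by
  refine ae_all_iff.2 fun k => measure_mono_null (fun x hx => ?_) (show P (T k ⁻¹' {0}) = 0 by
    rwa [← Measure.map_apply (hmeas k) (measurableSet_singleton 0), hident k,
      Measure.map_apply (hmeas 0) (measurableSet_singleton 0)])
  simpa [Nat.pos_iff_ne_zero] using hx

-- `Zfun P T ρ β h N` unfolds to `∫ x, weight ρ β h N (renewalIndicator (T · x)) ∂P`.
lemma Zfun_eq_integral_weightUpTo (hpos : ∀ᵐ x ∂P, ∀ k, 0 < T k x) (N : ℕ) :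
    Zfun P T ρ β h N = ∫ x, weightUpTo ρ β h N N (fun k => T k x) ∂P :=
  integral_congr_ae (hpos.mono fun _ hx => (weightUpTo_self hx N).symm)

variable [IsProbabilityMeasure P]

lemma integrable_weightUpTo (hmeas : ∀ i, Measurable (T i)) (N c : ℕ) :
    Integrable (fun x => weightUpTo ρ β h N c fun k => T k x) P :=
  integrable_of_dependsOn hmeas (dependsOn_weightUpTo N c) (abs_weightUpTo_le N c)

lemma integrable_weightAtEpoch_mul_weightUpTo (hmeas : ∀ i, Measurable (T i)) (N M m : ℕ) :
    Integrable (fun x => weightAtEpoch ρ β h N m (fun k => T k x)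
      * weightUpTo ρ β h M M fun k => T (m + k) x) P :=
  (integrable_of_dependsOn hmeas (dependsOn_weightAtEpoch N m) (abs_weightAtEpoch_le N m)).mul_bdd
    (integrable_weightUpTo (fun k => hmeas (m + k)) M M).aestronglyMeasurable
    (ae_of_all _ fun _ => abs_weightUpTo_le M M _)

lemma Zfun_mul_Zfun (hmeas : ∀ i, Measurable (T i)) (hindep : iIndepFun T P)
    (hident : ∀ i, P.map (T i) = P.map (T 0)) (hpos : ∀ᵐ x ∂P, ∀ k, 0 < T k x) (N M : ℕ) :
    Zfun P T ρ β h N * Zfun P T ρ β h M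
      = ∫ x, ∑ m ∈ range (N + 1), weightAtEpoch ρ β h N m (fun k => T k x)
          * weightUpTo ρ β h M M (fun k => T (m + k) x) ∂P := by
  have hZN : Zfun P T ρ β h N
      = ∑ m ∈ range (N + 1), ∫ x, weightAtEpoch ρ β h N m (fun k => T k x) ∂P := by
    rw [← integral_finsetSum _ fun m _ => integrable_of_dependsOn hmeas
      (dependsOn_weightAtEpoch N m) (abs_weightAtEpoch_le N m)]
    exact integral_congr_ae (hpos.mono fun x hx => (sum_weightAtEpoch hx N).symm)
  rw [hZN, Zfun_eq_integral_weightUpTo hpos M, sum_mul,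
    integral_finsetSum _ fun m _ => integrable_weightAtEpoch_mul_weightUpTo hmeas N M m]
  exact sum_congr rfl fun m _ => (integral_mul_comp_shift hmeas hindep hident
    (dependsOn_weightAtEpoch N m) (dependsOn_weightUpTo M M)).symm

end PartitionFunction

end RenewalPinning

open RenewalPinning

theorem annealed_partition_supermultiplicative_general
    {Ω : Type*} [MeasurableSpace Ω] (P : Measure Ω) [IsProbabilityMeasure P]
    (T : ℕ → Ω → ℕ) (hmeas : ∀ i, Measurable (T i))
    (hindep : iIndepFun T P)
    (hident : ∀ i, Measure.map (T i) P = Measure.map (T 0) P)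
    (K : ℕ → ℝ) (hK0 : K 0 = 0)
    (hlaw : ∀ n, (P (T 0 ⁻¹' {n})).toReal = K n)
    (q : ℕ) (ρ : ℕ → ℝ) (hρ : ∀ k, q < k → ρ k = 0) :
    ∃ C : ℝ, ∀ β h : ℝ, 0 ≤ β → ∀ N M : ℕ, 1 ≤ N → 1 ≤ M →
      Real.exp (C * β ^ 2) * Zfun P T ρ β h N * Zfun P T ρ β h M ≤
        Zfun P T ρ β h (N + M) := by
  refine ⟨-((q : ℝ) ^ 2 * ∑ k ∈ Finset.range (q + 1), |ρ k|), fun β h _ N M _ _ => ?_⟩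
  have hpos : ∀ᵐ x ∂P, ∀ k, 0 < T k x := ae_forall_pos hmeas hident <|
    ((ENNReal.toReal_eq_zero_iff _).1 ((hlaw 0).trans hK0)).resolve_right (measure_ne_top P _)
  rw [mul_assoc, Zfun_mul_Zfun hmeas hindep hident hpos, ← integral_const_mul,
    Zfun_eq_integral_weightUpTo hpos]
  exact integral_mono_ae
    ((integrable_finsetSum _ fun m _ =>
      integrable_weightAtEpoch_mul_weightUpTo hmeas N M m).const_mul _)
    (integrable_weightUpTo hmeas _ _) (hpos.mono fun x hx => sum_weightAtEpoch_mul_le hρ hx N M)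

/-- Approximate supermultiplicativity of the annealed partition function:
there is a constant `C` depending only on `ρ` and `q` such that
`Z_{N+M}(β,h) ≥ e^{Cβ²} Z_N(β,h) Z_M(β,h)`. -/
theorem annealed_partition_supermultiplicative
    {Ω : Type*} [MeasurableSpace Ω] (P : Measure Ω) [IsProbabilityMeasure P]
    (T : ℕ → Ω → ℕ) (hmeas : ∀ i, Measurable (T i))
    (hindep : iIndepFun T P)
    (hident : ∀ i, Measure.map (T i) P = Measure.map (T 0) P)
    (K : ℕ → ℝ) (hK0 : K 0 = 0) (hKpos : ∀ n, 1 ≤ n → 0 < K n)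
    (hlaw : ∀ n, (P (T 0 ⁻¹' {n})).toReal = K n)
    (hrec : ∑' n : ℕ, K n = 1)  -- recurrence
    (q : ℕ) (ρ : ℕ → ℝ) (hρ : ∀ k, q < k → ρ k = 0) :
    ∃ C : ℝ, ∀ β h : ℝ, 0 ≤ β → ∀ N M : ℕ, 1 ≤ N → 1 ≤ M →
      Real.exp (C * β ^ 2) * Zfun P T ρ β h N * Zfun P T ρ β h M ≤
        Zfun P T ρ β h (N + M) :=
  annealed_partition_supermultiplicative_general P T hmeas hindep hident K hK0 hlaw q ρ hρ
end

section
/- Under the assumptions of the previous statement, the annealed free energy F^ann(β,h) = lim_{N→∞} (1/N) log Z_N(β,h) exists and is finite for every h ∈ ℝ and β ≥ 0. -/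
open scoped Classical
open MeasureTheory ProbabilityTheory Filter

/-!
Summing over the first gaps of the renewal, `Z_N` becomes a finite sum over the compositions `c`
of `N` of `∏ K(cᵢ) · exp H_N(c)`. Concatenation of compositions is injective and multiplies the
weights `∏ K(cᵢ)`. Since `ρ` has range `q`, the Hamiltonian of a concatenation differs from the sum
of the Hamiltonians of its two halves only by their cross term, which involves only the last `q`
sites of the first half and is at least `-β² q ∑_{1 ≤ k ≤ q} |ρ k|`. Hence `Z_N Z_M ≤ e^C Z_{N+M}`,
and together with `Z_N ≤ e^{DN}`, Fekete's lemma applied to `C - log Z_N` gives the limit.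
-/

open Finset

section Intervals

variable {M : Type*} [AddCommMonoid M]

lemma Finset.sum_Icc_add_left (f : ℕ → M) (a b c : ℕ) :
    ∑ j ∈ Icc (c + a) (c + b), f j = ∑ j ∈ Icc a b, f (c + j) := by
  rw [← map_add_left_Icc, sum_map]
  rfl

lemma Finset.sum_Icc_succ_add (f : ℕ → M) {a N : ℕ} (ha : a ≤ N) (L : ℕ) :
    ∑ j ∈ Icc (a + 1) (N + L), f j = ∑ j ∈ Icc (a + 1) N, f j + ∑ j ∈ Icc 1 L, f (N + j) := by
  rw [← sum_Icc_add_left, Icc_add_one_left_eq_Ioc, Icc_add_one_left_eq_Ioc,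
    Icc_add_one_left_eq_Ioc, sum_Ioc_consecutive f ha (N.le_add_right L)]

lemma Finset.sum_Icc_one_add (f : ℕ → M) (N L : ℕ) :
    ∑ j ∈ Icc 1 (N + L), f j = ∑ j ∈ Icc 1 N, f j + ∑ j ∈ Icc 1 L, f (N + j) :=
  sum_Icc_succ_add f N.zero_le L

lemma Finset.sum_Icc_one_le_mul_of_eq_zero {f : ℕ → ℝ} {q N : ℕ} {C : ℝ} (hC : 0 ≤ C)
    (hfC : ∀ i ∈ Icc 1 N, f i ≤ C) (hf : ∀ i, i + q ≤ N → f i = 0) :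
    ∑ i ∈ Icc 1 N, f i ≤ q * C := by
  rw [← zero_add 1, Icc_add_one_left_eq_Ioc,
    ← sum_Ioc_consecutive f (N - q).zero_le (N.sub_le q)]
  have hlow : ∑ i ∈ Ioc 0 (N - q), f i = 0 :=
    sum_eq_zero fun i hi => hf i (by simp only [mem_Ioc] at hi; omega)
  have hhigh : ∑ i ∈ Ioc (N - q) N, f i ≤ #(Ioc (N - q) N) • C :=
    sum_le_card_nsmul _ _ _ fun i hi => hfC i (by simp only [mem_Ioc, mem_Icc] at hi ⊢; omega)
  have hcard : (#(Ioc (N - q) N) : ℝ) ≤ q := by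
    rw [Nat.card_Ioc]
    exact_mod_cast (by omega : N - (N - q) ≤ q)
  rw [hlow, zero_add]
  rw [nsmul_eq_mul] at hhigh
  exact hhigh.trans (mul_le_mul_of_nonneg_right hcard hC)

end Intervals

section Energy

variable {ρ : ℕ → ℝ} {q : ℕ} {δ : ℕ → ℝ}

variable (ρ) in
def pairEnergy (N : ℕ) (δ : ℕ → ℝ) : ℝ :=
  ∑ i ∈ Icc 1 N, ∑ j ∈ Icc (i + 1) N, ρ (j - i) * δ i * δ j

variable (ρ) in
def crossEnergy (N M : ℕ) (δ : ℕ → ℝ) : ℝ :=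
  ∑ i ∈ Icc 1 N, ∑ j ∈ Icc 1 M, ρ (N + j - i) * δ i * δ (N + j)

variable (ρ) in
noncomputable def pinningEnergy (β h : ℝ) (N : ℕ) (δ : ℕ → ℝ) : ℝ :=
  (h + β ^ 2 / 2) * ∑ n ∈ Icc 1 N, δ n + β ^ 2 * pairEnergy ρ N δ

variable (ρ) in
lemma pairEnergy_add (N M : ℕ) (δ : ℕ → ℝ) :
    pairEnergy ρ (N + M) δ =
      pairEnergy ρ N δ + crossEnergy ρ N M δ + pairEnergy ρ M (fun n => δ (N + n)) := by
  have hleft : ∀ i ∈ Icc 1 N, ∑ j ∈ Icc (i + 1) (N + M), ρ (j - i) * δ i * δ j =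
      ∑ j ∈ Icc (i + 1) N, ρ (j - i) * δ i * δ j
        + ∑ j ∈ Icc 1 M, ρ (N + j - i) * δ i * δ (N + j) := fun i hi =>
    sum_Icc_succ_add _ (mem_Icc.1 hi).2 M
  have hright : ∀ i ∈ Icc 1 M, ∑ j ∈ Icc (N + i + 1) (N + M), ρ (j - (N + i)) * δ (N + i) * δ j =
      ∑ j ∈ Icc (i + 1) M, ρ (j - i) * δ (N + i) * δ (N + j) := fun i _ => by
    simp only [add_assoc, sum_Icc_add_left, Nat.add_sub_add_left]
  rw [pairEnergy, sum_Icc_one_add, sum_congr rfl hleft, sum_congr rfl hright, sum_add_distrib,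
    pairEnergy, pairEnergy, crossEnergy]

lemma abs_mul_mul_le_abs (hδ : ∀ n, |δ n| ≤ 1) (r : ℝ) (i j : ℕ) : |r * δ i * δ j| ≤ |r| := by
  rw [abs_mul, abs_mul]
  calc |r| * |δ i| * |δ j| ≤ |r| * 1 * 1 := by gcongr <;> exact hδ _
    _ = |r| := by ring

section FiniteRange

variable (hρ : ∀ k, q < k → ρ k = 0)
include hρ

lemma sum_Icc_abs_le (L : ℕ) : ∑ k ∈ Icc 1 L, |ρ k| ≤ ∑ k ∈ Icc 1 q, |ρ k| := by
  rcases le_total L q with hL | hL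
  · exact sum_le_sum_of_subset_of_nonneg (Icc_subset_Icc_right hL) fun _ _ _ => abs_nonneg _
  · obtain ⟨L, rfl⟩ := Nat.exists_eq_add_of_le hL
    rw [sum_Icc_one_add, add_le_iff_nonpos_right]
    exact (sum_eq_zero fun j hj => by rw [hρ _ (by simp only [mem_Icc] at hj; omega), abs_zero]).le

lemma sum_Icc_abs_sub_le {i a : ℕ} (hia : i < a) (b : ℕ) :
    ∑ j ∈ Icc a b, |ρ (j - i)| ≤ ∑ k ∈ Icc 1 q, |ρ k| :=
  calc ∑ j ∈ Icc a b, |ρ (j - i)| ≤ ∑ j ∈ Icc (i + 1) (i + (b - i)), |ρ (j - i)| :=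
        sum_le_sum_of_subset_of_nonneg (fun j => by simp only [mem_Icc]; omega)
          fun _ _ _ => abs_nonneg _
    _ = ∑ k ∈ Icc 1 (b - i), |ρ k| := by simp only [sum_Icc_add_left, Nat.add_sub_cancel_left]
    _ ≤ _ := sum_Icc_abs_le hρ _

lemma pairEnergy_le (hδ : ∀ n, |δ n| ≤ 1) (N : ℕ) :
    pairEnergy ρ N δ ≤ N * ∑ k ∈ Icc 1 q, |ρ k| :=
  calc pairEnergy ρ N δ ≤ ∑ i ∈ Icc 1 N, ∑ j ∈ Icc (i + 1) N, |ρ (j - i)| :=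
        sum_le_sum fun i _ => sum_le_sum fun j _ =>
          (le_abs_self _).trans (abs_mul_mul_le_abs hδ _ i j)
    _ ≤ ∑ i ∈ Icc 1 N, ∑ k ∈ Icc 1 q, |ρ k| :=
        sum_le_sum fun i _ => sum_Icc_abs_sub_le hρ i.lt_succ_self N
    _ = N * ∑ k ∈ Icc 1 q, |ρ k| := by simp

lemma neg_le_crossEnergy (hδ : ∀ n, |δ n| ≤ 1) (N M : ℕ) :
    -(q * ∑ k ∈ Icc 1 q, |ρ k|) ≤ crossEnergy ρ N M δ := by
  have hrow : ∀ i ∈ Icc 1 N, ∑ j ∈ Icc 1 M, |ρ (N + j - i)| ≤ ∑ k ∈ Icc 1 q, |ρ k| :=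
    fun i hi => by
      rw [← sum_Icc_add_left (fun j => |ρ (j - i)|)]
      exact sum_Icc_abs_sub_le hρ (by simp only [mem_Icc] at hi; omega) _
  have hfar : ∀ i, i + q ≤ N → ∑ j ∈ Icc 1 M, |ρ (N + j - i)| = 0 := fun i hi =>
    sum_eq_zero fun j hj => by rw [hρ _ (by simp only [mem_Icc] at hj; omega), abs_zero]
  calc -(q * ∑ k ∈ Icc 1 q, |ρ k|) ≤ -∑ i ∈ Icc 1 N, ∑ j ∈ Icc 1 M, |ρ (N + j - i)| :=
        neg_le_neg (sum_Icc_one_le_mul_of_eq_zero (sum_nonneg fun _ _ => abs_nonneg _) hrow hfar)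
    _ ≤ crossEnergy ρ N M δ := by
        simp only [crossEnergy, ← sum_neg_distrib]
        exact sum_le_sum fun i _ => sum_le_sum fun j _ =>
          neg_le_of_abs_le (abs_mul_mul_le_abs hδ _ i (N + j))

lemma pinningEnergy_le (hδ : ∀ n, |δ n| ≤ 1) (β h : ℝ) (N : ℕ) :
    pinningEnergy ρ β h N δ ≤ (|h + β ^ 2 / 2| + β ^ 2 * ∑ k ∈ Icc 1 q, |ρ k|) * N := by
  have hone : (h + β ^ 2 / 2) * ∑ n ∈ Icc 1 N, δ n ≤ |h + β ^ 2 / 2| * N :=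
    calc (h + β ^ 2 / 2) * ∑ n ∈ Icc 1 N, δ n ≤ |h + β ^ 2 / 2| * |∑ n ∈ Icc 1 N, δ n| := by
          rw [← abs_mul]; exact le_abs_self _
      _ ≤ |h + β ^ 2 / 2| * N := by
          gcongr
          exact (abs_sum_le_sum_abs _ _).trans
            ((sum_le_card_nsmul _ _ 1 fun n _ => hδ n).trans (by simp))
  have hpair := mul_le_mul_of_nonneg_left (pairEnergy_le hρ hδ N) (sq_nonneg β)
  rw [pinningEnergy]
  linarith

lemma pinningEnergy_add_le (hδ : ∀ n, |δ n| ≤ 1) (β h : ℝ) (N M : ℕ) :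
    pinningEnergy ρ β h N δ + pinningEnergy ρ β h M (fun n => δ (N + n)) ≤
      β ^ 2 * (q * ∑ k ∈ Icc 1 q, |ρ k|) + pinningEnergy ρ β h (N + M) δ := by
  have hcross := mul_le_mul_of_nonneg_left (neg_le_crossEnergy hρ hδ N M) (sq_nonneg β)
  rw [pinningEnergy, pinningEnergy, pinningEnergy, sum_Icc_one_add, pairEnergy_add]
  linarith

end FiniteRange

lemma pinningEnergy_congr {δ' : ℕ → ℝ} {N : ℕ} (hδ : ∀ n ≤ N, δ n = δ' n) (β h : ℝ) :
    pinningEnergy ρ β h N δ = pinningEnergy ρ β h N δ' := by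
  have hδ' : ∀ n ∈ Icc 1 N, δ n = δ' n := fun n hn => hδ n (mem_Icc.1 hn).2
  simp only [pinningEnergy, pairEnergy]
  rw [sum_congr rfl hδ']
  congr 2
  refine sum_congr rfl fun i hi => sum_congr rfl fun j hj => ?_
  rw [hδ' i hi, hδ j (mem_Icc.1 hj).2]

end Energy

namespace Composition

variable {N M : ℕ}

noncomputable def renewalIndicator (c : Composition N) (n : ℕ) : ℝ :=
  if ∃ m, c.sizeUpTo m = n then 1 else 0

noncomputable def weight (K : ℕ → ℝ) (c : Composition N) : ℝ :=
  (c.blocks.map K).prod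

lemma abs_renewalIndicator_le (c : Composition N) (n : ℕ) : |c.renewalIndicator n| ≤ 1 := by
  unfold renewalIndicator
  split_ifs <;> simp

lemma renewalIndicator_self (c : Composition N) : c.renewalIndicator N = 1 :=
  if_pos ⟨c.length, c.sizeUpTo_length⟩

lemma sizeUpTo_min_length (c : Composition N) (m : ℕ) :
    c.sizeUpTo (min m c.length) = c.sizeUpTo m := by
  rcases le_total m c.length with hm | hm
  · rw [min_eq_left hm]
  · rw [min_eq_right hm, c.sizeUpTo_length, c.sizeUpTo_ofLength_le m hm]

lemma sizeUpTo_append_of_le (c₁ : Composition N) (c₂ : Composition M) {m : ℕ}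
    (hm : m ≤ c₁.length) : (c₁.append c₂).sizeUpTo m = c₁.sizeUpTo m := by
  simp only [sizeUpTo, append_blocks, List.take_append_of_le_length hm]

lemma sizeUpTo_append_length_add (c₁ : Composition N) (c₂ : Composition M) (k : ℕ) :
    (c₁.append c₂).sizeUpTo (c₁.length + k) = N + c₂.sizeUpTo k := by
  simp only [sizeUpTo, append_blocks, ← blocks_length, List.take_length_add_append,
    List.sum_append, blocks_sum]

lemma renewalIndicator_append_of_le (c₁ : Composition N) (c₂ : Composition M) {n : ℕ}
    (hn : n ≤ N) : (c₁.append c₂).renewalIndicator n = c₁.renewalIndicator n := by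
  refine if_congr ⟨fun ⟨m, hm⟩ => ?_, fun ⟨m, hm⟩ => ?_⟩ rfl rfl
  · rcases le_or_gt m c₁.length with hle | hlt
    · exact ⟨m, (sizeUpTo_append_of_le c₁ c₂ hle).symm.trans hm⟩
    · obtain ⟨k, rfl⟩ := Nat.exists_eq_add_of_lt hlt
      rw [add_assoc, sizeUpTo_append_length_add] at hm
      exact ⟨c₁.length, by rw [c₁.sizeUpTo_length]; omega⟩
  · exact ⟨min m c₁.length, by
      rw [sizeUpTo_append_of_le c₁ c₂ (min_le_right _ _), sizeUpTo_min_length, hm]⟩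

lemma renewalIndicator_append_add (c₁ : Composition N) (c₂ : Composition M) (n : ℕ) :
    (c₁.append c₂).renewalIndicator (N + n) = c₂.renewalIndicator n := by
  refine if_congr ⟨fun ⟨m, hm⟩ => ?_, fun ⟨k, hk⟩ => ?_⟩ rfl rfl
  · rcases le_or_gt m c₁.length with hle | hlt
    · have := c₁.sizeUpTo_le m
      rw [sizeUpTo_append_of_le c₁ c₂ hle] at hm
      exact ⟨0, by rw [c₂.sizeUpTo_zero]; omega⟩
    · obtain ⟨k, rfl⟩ := Nat.exists_eq_add_of_le hlt.le
      rw [sizeUpTo_append_length_add] at hm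
      exact ⟨k, by omega⟩
  · exact ⟨c₁.length + k, by rw [sizeUpTo_append_length_add, hk]⟩

lemma eq_of_blocks_prefix {c d : Composition N} (h : c.blocks <+: d.blocks) : c = d := by
  obtain ⟨l, hl⟩ := h
  have hsum : l.sum = 0 := by
    have := congrArg List.sum hl
    rw [List.sum_append, c.blocks_sum, d.blocks_sum] at this
    omega
  have hnil : l = [] := List.eq_nil_iff_forall_not_mem.2 fun x hx =>
    (d.blocks_pos (hl ▸ List.mem_append_right _ hx)).ne' (List.sum_eq_zero_iff.1 hsum x hx)
  exact Composition.ext (by rw [← hl, hnil, List.append_nil])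

lemma append_injective :
    Function.Injective fun p : Composition N × Composition M => p.1.append p.2 := by
  rintro ⟨c₁, c₂⟩ ⟨d₁, d₂⟩ h
  have hb : c₁.blocks ++ c₂.blocks = d₁.blocks ++ d₂.blocks := congrArg blocks h
  have h₁ : c₁ = d₁ := by
    rcases List.prefix_or_prefix_of_prefix (List.prefix_append c₁.blocks c₂.blocks)
      (hb ▸ List.prefix_append d₁.blocks d₂.blocks) with hp | hp
    · exact eq_of_blocks_prefix hp
    · exact (eq_of_blocks_prefix hp).symm
  subst h₁
  exact Prod.ext rfl (Composition.ext (List.append_cancel_left hb))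

lemma weight_append (K : ℕ → ℝ) (c₁ : Composition N) (c₂ : Composition M) :
    (c₁.append c₂).weight K = c₁.weight K * c₂.weight K := by
  simp [weight]

lemma weight_nonneg {K : ℕ → ℝ} (hK : ∀ n, 0 ≤ K n) (c : Composition N) : 0 ≤ c.weight K :=
  List.prod_nonneg fun _ hx => by
    obtain ⟨n, -, rfl⟩ := List.mem_map.1 hx
    exact hK n

lemma weight_ones (K : ℕ → ℝ) (N : ℕ) : (ones N).weight K = K 1 ^ N := by
  simp [weight, ones]

end Composition

section PartitionSum

open Composition

variable {K ρ : ℕ → ℝ} {q : ℕ}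

variable (K ρ) in
noncomputable def Composition.gibbsWeight {N : ℕ} (β h : ℝ) (c : Composition N) : ℝ :=
  c.weight K * Real.exp (pinningEnergy ρ β h N c.renewalIndicator)

variable (K ρ) in
noncomputable def partitionSum (β h : ℝ) (N : ℕ) : ℝ :=
  ∑ c : Composition N, c.gibbsWeight K ρ β h

lemma Composition.gibbsWeight_nonneg (hK : ∀ n, 0 ≤ K n) (β h : ℝ) {N : ℕ} (c : Composition N) :
    0 ≤ c.gibbsWeight K ρ β h :=
  mul_nonneg (weight_nonneg hK c) (Real.exp_pos _).le

lemma Composition.gibbsWeight_mul_le (hK : ∀ n, 0 ≤ K n) (hρ : ∀ k, q < k → ρ k = 0)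
    (β h : ℝ) {N M : ℕ} (c₁ : Composition N) (c₂ : Composition M) :
    c₁.gibbsWeight K ρ β h * c₂.gibbsWeight K ρ β h ≤
      Real.exp (β ^ 2 * (q * ∑ k ∈ Icc 1 q, |ρ k|)) * (c₁.append c₂).gibbsWeight K ρ β h := by
  have henergy := pinningEnergy_add_le hρ (c₁.append c₂).abs_renewalIndicator_le β h N M
  rw [pinningEnergy_congr (fun n hn => renewalIndicator_append_of_le c₁ c₂ hn),
    funext (renewalIndicator_append_add c₁ c₂)] at henergy
  have hw := mul_nonneg (weight_nonneg hK c₁) (weight_nonneg hK c₂)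
  calc c₁.gibbsWeight K ρ β h * c₂.gibbsWeight K ρ β h = c₁.weight K * c₂.weight K *
        Real.exp (pinningEnergy ρ β h N c₁.renewalIndicator
          + pinningEnergy ρ β h M c₂.renewalIndicator) := by
        rw [gibbsWeight, gibbsWeight, Real.exp_add]; ring
    _ ≤ c₁.weight K * c₂.weight K * Real.exp (β ^ 2 * (q * ∑ k ∈ Icc 1 q, |ρ k|)
          + pinningEnergy ρ β h (N + M) (c₁.append c₂).renewalIndicator) := by gcongr
    _ = _ := by rw [gibbsWeight, weight_append, Real.exp_add]; ring

lemma partitionSum_pos (hK : ∀ n, 0 ≤ K n) (hK1 : 0 < K 1) (β h : ℝ) (N : ℕ) :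
    0 < partitionSum K ρ β h N :=
  sum_pos' (fun c _ => c.gibbsWeight_nonneg hK β h)
    ⟨ones N, mem_univ _, mul_pos (by rw [weight_ones]; exact pow_pos hK1 N) (Real.exp_pos _)⟩

lemma partitionSum_le (hK : ∀ n, 0 ≤ K n) (hρ : ∀ k, q < k → ρ k = 0) (β h : ℝ) {N : ℕ}
    (hweight : ∑ c : Composition N, c.weight K ≤ 1) :
    partitionSum K ρ β h N ≤
      Real.exp ((|h + β ^ 2 / 2| + β ^ 2 * ∑ k ∈ Icc 1 q, |ρ k|) * N) := by
  set D := |h + β ^ 2 / 2| + β ^ 2 * ∑ k ∈ Icc 1 q, |ρ k|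
  calc partitionSum K ρ β h N ≤ ∑ c : Composition N, c.weight K * Real.exp (D * N) :=
        sum_le_sum fun c _ => mul_le_mul_of_nonneg_left
          (Real.exp_le_exp.2 (pinningEnergy_le hρ c.abs_renewalIndicator_le β h N))
          (weight_nonneg hK c)
    _ = (∑ c : Composition N, c.weight K) * Real.exp (D * N) := by rw [sum_mul]
    _ ≤ Real.exp (D * N) := mul_le_of_le_one_left (Real.exp_pos _).le hweight

lemma partitionSum_mul_le (hK : ∀ n, 0 ≤ K n) (hρ : ∀ k, q < k → ρ k = 0) (β h : ℝ)
    (N M : ℕ) :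
    partitionSum K ρ β h N * partitionSum K ρ β h M ≤
      Real.exp (β ^ 2 * (q * ∑ k ∈ Icc 1 q, |ρ k|)) * partitionSum K ρ β h (N + M) := by
  set C := β ^ 2 * (q * ∑ k ∈ Icc 1 q, |ρ k|)
  calc partitionSum K ρ β h N * partitionSum K ρ β h M
      = ∑ p : Composition N × Composition M,
          p.1.gibbsWeight K ρ β h * p.2.gibbsWeight K ρ β h := by
        rw [partitionSum, partitionSum, sum_mul_sum, ← univ_product_univ, sum_product]
    _ ≤ ∑ p : Composition N × Composition M, Real.exp C * (p.1.append p.2).gibbsWeight K ρ β h :=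
        sum_le_sum fun p _ => gibbsWeight_mul_le hK hρ β h p.1 p.2
    _ = Real.exp C * ∑ c ∈ univ.image (fun p : Composition N × Composition M => p.1.append p.2),
          c.gibbsWeight K ρ β h := by
        rw [sum_image fun p _ p' _ h => append_injective h, mul_sum]
    _ ≤ Real.exp C * partitionSum K ρ β h (N + M) :=
        mul_le_mul_of_nonneg_left (sum_le_sum_of_subset_of_nonneg (subset_univ _)
          fun c _ _ => c.gibbsWeight_nonneg hK β h) (Real.exp_pos _).le

end PartitionSum

section GapEvents

open Composition

variable {Ω : Type*} {T : ℕ → Ω → ℕ} {N : ℕ} {x : Ω}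

def gapEvent (T : ℕ → Ω → ℕ) (c : Composition N) : Set Ω :=
  ⋂ i : Fin c.length, T i ⁻¹' {c.blocksFun i}

lemma mem_gapEvent {c : Composition N} :
    x ∈ gapEvent T c ↔ ∀ i (hi : i < c.length), T i x = c.blocks[i] := by
  simp [gapEvent, Fin.forall_iff, blocksFun]

lemma sum_range_eq_sizeUpTo {c : Composition N} (hx : x ∈ gapEvent T c) {m : ℕ}
    (hm : m ≤ c.length) : ∑ k ∈ range m, T k x = c.sizeUpTo m := by
  induction m with
  | zero => simp
  | succ m ih =>
    rw [sum_range_succ, ih (by omega), c.sizeUpTo_succ hm, mem_gapEvent.1 hx m hm]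

lemma renewalδ_eq_renewalIndicator {c : Composition N} (hx : x ∈ gapEvent T c) {n : ℕ}
    (hn : n ≤ N) : renewalδ T n x = c.renewalIndicator n := by
  refine if_congr ⟨fun ⟨m, hm⟩ => ?_, fun ⟨m, hm⟩ => ?_⟩ rfl rfl
  · rcases le_or_gt m c.length with hle | hlt
    · exact ⟨m, (sum_range_eq_sizeUpTo hx hle).symm.trans hm⟩
    · have hmono := sum_le_sum_of_subset (f := fun k => T k x) (range_mono hlt.le)
      rw [sum_range_eq_sizeUpTo hx le_rfl, c.sizeUpTo_length] at hmono
      exact ⟨c.length, by rw [c.sizeUpTo_length]; omega⟩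
  · exact ⟨min m c.length, by
      rw [sum_range_eq_sizeUpTo hx (min_le_right _ _), sizeUpTo_min_length, hm]⟩

lemma exists_mem_gapEvent (hT : ∀ i, 0 < T i x) (hN : ∃ m, ∑ k ∈ range m, T k x = N) :
    ∃ c : Composition N, x ∈ gapEvent T c := by
  obtain ⟨m, hm⟩ := hN
  refine ⟨⟨List.ofFn fun k : Fin m => T k x, ?_, ?_⟩, ?_⟩
  · intro i hi
    obtain ⟨k, rfl⟩ := List.mem_ofFn.1 hi
    exact hT k
  · rw [List.sum_ofFn, ← hm, sum_range]
  · rw [mem_gapEvent]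
    intro i hi
    simp

lemma eq_of_mem_gapEvent {c c' : Composition N} (hx : x ∈ gapEvent T c)
    (hx' : x ∈ gapEvent T c') : c = c' := by
  have hprefix : ∀ {d d' : Composition N}, x ∈ gapEvent T d → x ∈ gapEvent T d' →
      d.length ≤ d'.length → d.blocks <+: d'.blocks := fun hd hd' hle =>
    List.prefix_iff_getElem.2 ⟨hle, fun i hi =>
      (mem_gapEvent.1 hd i hi).symm.trans (mem_gapEvent.1 hd' i (hi.trans_le hle))⟩
  rcases le_total c.length c'.length with hle | hle
  · exact eq_of_blocks_prefix (hprefix hx hx' hle)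
  · exact (eq_of_blocks_prefix (hprefix hx' hx hle)).symm

lemma exp_pinningEnergy_mul_renewalδ (hT : ∀ i, 0 < T i x) (ρ : ℕ → ℝ) (β h : ℝ) :
    Real.exp (pinningEnergy ρ β h N fun n => renewalδ T n x) * renewalδ T N x =
      ∑ c : Composition N, (gapEvent T c).indicator
        (fun _ => Real.exp (pinningEnergy ρ β h N c.renewalIndicator)) x := by
  by_cases hx : ∃ c : Composition N, x ∈ gapEvent T c
  · obtain ⟨c, hc⟩ := hx
    rw [sum_eq_single c (fun c' _ hne => Set.indicator_of_notMem
        (fun hc' => hne (eq_of_mem_gapEvent hc' hc)) _) (by simp),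
      Set.indicator_of_mem hc, renewalδ_eq_renewalIndicator hc le_rfl, renewalIndicator_self,
      mul_one, pinningEnergy_congr fun n hn => renewalδ_eq_renewalIndicator hc hn]
  · have hN : renewalδ T N x = 0 := if_neg fun hN => hx (exists_mem_gapEvent hT hN)
    rw [hN, mul_zero, eq_comm]
    exact sum_eq_zero fun c _ => Set.indicator_of_notMem (fun hc => hx ⟨c, hc⟩) _

end GapEvents

lemma Zfun_eq_integral_pinningEnergy {Ω : Type*} [MeasurableSpace Ω] (P : Measure Ω)
    (T : ℕ → Ω → ℕ) (ρ : ℕ → ℝ) (β h : ℝ) (N : ℕ) :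
    Zfun P T ρ β h N = ∫ x, Real.exp (pinningEnergy ρ β h N fun n => renewalδ T n x)
      * renewalδ T N x ∂P := rfl

section RenewalProcess

open Composition

variable {Ω : Type*} [MeasurableSpace Ω] {P : Measure Ω}
  {T : ℕ → Ω → ℕ} {K : ℕ → ℝ}
  (hmeas : ∀ i, Measurable (T i)) (hident : ∀ i, Measure.map (T i) P = Measure.map (T 0) P)
  (hlaw : ∀ n, (P (T 0 ⁻¹' {n})).toReal = K n)

include hmeas

lemma measurableSet_gapEvent {N : ℕ} (c : Composition N) : MeasurableSet (gapEvent T c) :=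
  MeasurableSet.iInter fun _ => hmeas _ (measurableSet_singleton _)

include hident hlaw

lemma measureReal_preimage_singleton (i n : ℕ) : P.real (T i ⁻¹' {n}) = K n := by
  rw [measureReal_def, ← Measure.map_apply (hmeas i) (measurableSet_singleton n), hident i,
    Measure.map_apply (hmeas 0) (measurableSet_singleton n), hlaw]

lemma ae_forall_pos [IsFiniteMeasure P] (hK0 : K 0 = 0) : ∀ᵐ x ∂P, ∀ i, 0 < T i x := by
  refine ae_all_iff.2 fun i => ?_
  have hzero : P.real (T i ⁻¹' {0}) = 0 := by
    rw [measureReal_preimage_singleton hmeas hident hlaw, hK0]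
  rw [ae_iff]
  simpa [Nat.pos_iff_ne_zero, Set.preimage] using (measureReal_eq_zero_iff).1 hzero

lemma measureReal_gapEvent (hindep : iIndepFun T P) {N : ℕ} (c : Composition N) :
    P.real (gapEvent T c) = c.weight K := by
  rw [measureReal_def, gapEvent, (hindep.precomp Fin.val_injective).meas_iInter
    fun i => ⟨{c.blocksFun i}, measurableSet_singleton _, rfl⟩, ENNReal.toReal_prod]
  simp_rw [← measureReal_def, measureReal_preimage_singleton hmeas hident hlaw]
  rw [weight, ← c.ofFn_blocksFun, List.map_ofFn, List.prod_ofFn]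
  rfl

lemma sum_weight_le_one [IsProbabilityMeasure P] (hindep : iIndepFun T P) (N : ℕ) :
    ∑ c : Composition N, c.weight K ≤ 1 := by
  simp_rw [← measureReal_gapEvent hmeas hident hlaw hindep]
  rw [← measureReal_iUnion_fintype (fun c c' hne => Set.disjoint_left.2 fun x hx hx' =>
    hne (eq_of_mem_gapEvent hx hx')) (measurableSet_gapEvent hmeas)]
  exact measureReal_le_one

lemma Zfun_eq_partitionSum [IsFiniteMeasure P] (hindep : iIndepFun T P) (hK0 : K 0 = 0)
    (ρ : ℕ → ℝ) (β h : ℝ) (N : ℕ) : Zfun P T ρ β h N = partitionSum K ρ β h N := by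
  rw [Zfun_eq_integral_pinningEnergy,
    integral_congr_ae ((ae_forall_pos hmeas hident hlaw hK0).mono
      fun x hx => exp_pinningEnergy_mul_renewalδ hx ρ β h),
    integral_finsetSum _ fun c _ => (integrable_const _).indicator (measurableSet_gapEvent hmeas c)]
  refine sum_congr rfl fun c _ => ?_
  rw [integral_indicator_const _ (measurableSet_gapEvent hmeas c),
    measureReal_gapEvent hmeas hident hlaw hindep, smul_eq_mul, gibbsWeight]

end RenewalProcess

lemma exists_tendsto_log_div_of_mul_le_exp_mul {Z : ℕ → ℝ} {C D : ℝ} (hC : 0 ≤ C)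
    (hpos : ∀ n, 0 < Z n) (hmul : ∀ m n, Z m * Z n ≤ Real.exp C * Z (m + n))
    (hle : ∀ n, Z n ≤ Real.exp (D * n)) :
    ∃ F, Tendsto (fun n : ℕ => Real.log (Z n) / n) atTop (nhds F) := by
  set u : ℕ → ℝ := fun n => C - Real.log (Z n)
  have hsub : Subadditive u := fun m n => by
    have := Real.log_le_log (mul_pos (hpos m) (hpos n)) (hmul m n)
    rw [Real.log_mul (hpos m).ne' (hpos n).ne', Real.log_mul (Real.exp_pos C).ne' (hpos _).ne',
      Real.log_exp] at this
    simp only [u]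
    linarith
  have hbdd : BddBelow (Set.range fun n => u n / n) := by
    refine ⟨-|D|, Set.forall_mem_range.2 fun n => ?_⟩
    rcases n.eq_zero_or_pos with rfl | hn
    · simp
    · have hn' : (0 : ℝ) < n := Nat.cast_pos.2 hn
      have hlog := (Real.log_le_iff_le_exp (hpos n)).2 (hle n)
      have hD := mul_le_mul_of_nonneg_right (le_abs_self D) hn'.le
      rw [le_div_iff₀ hn']
      simp only [u]
      linarith
  have hlim := (tendsto_const_div_atTop_nhds_zero_nat C).sub (hsub.tendsto_lim hbdd)
  rw [zero_sub] at hlim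
  exact ⟨_, hlim.congr fun n => by simp only [u]; ring⟩

theorem annealed_free_energy_exists_general
    {Ω : Type*} [MeasurableSpace Ω] (P : Measure Ω) [IsProbabilityMeasure P]
    (T : ℕ → Ω → ℕ) (hmeas : ∀ i, Measurable (T i))
    (hindep : iIndepFun T P)
    (hident : ∀ i, Measure.map (T i) P = Measure.map (T 0) P)
    (K : ℕ → ℝ) (hK0 : K 0 = 0) (hKpos : ∀ n, 1 ≤ n → 0 < K n)
    (hlaw : ∀ n, (P (T 0 ⁻¹' {n})).toReal = K n)
    (q : ℕ) (ρ : ℕ → ℝ) (hρ : ∀ k, q < k → ρ k = 0)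
    (β h : ℝ) :
    ∃ Fann : ℝ, Tendsto (fun N : ℕ => Real.log (Zfun P T ρ β h N) / N)
      atTop (nhds Fann) := by
  have hK : ∀ n, 0 ≤ K n := fun n => hlaw n ▸ ENNReal.toReal_nonneg
  simp_rw [Zfun_eq_partitionSum hmeas hident hlaw hindep hK0]
  exact exists_tendsto_log_div_of_mul_le_exp_mul (by positivity)
    (partitionSum_pos hK (hKpos 1 le_rfl) β h) (partitionSum_mul_le hK hρ β h)
    fun N => partitionSum_le hK hρ β h (sum_weight_le_one hmeas hident hlaw hindep N)

/-- Existence and finiteness of the annealed free energy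
`F^ann(β,h) = lim_N (1/N) log Z_N(β,h)`. -/
theorem annealed_free_energy_exists
    {Ω : Type*} [MeasurableSpace Ω] (P : Measure Ω) [IsProbabilityMeasure P]
    (T : ℕ → Ω → ℕ) (hmeas : ∀ i, Measurable (T i))
    (hindep : iIndepFun T P)
    (hident : ∀ i, Measure.map (T i) P = Measure.map (T 0) P)
    (K : ℕ → ℝ) (hK0 : K 0 = 0) (hKpos : ∀ n, 1 ≤ n → 0 < K n)
    (hlaw : ∀ n, (P (T 0 ⁻¹' {n})).toReal = K n)
    (hrec : ∑' n : ℕ, K n = 1)  -- recurrence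
    (q : ℕ) (ρ : ℕ → ℝ) (hρ : ∀ k, q < k → ρ k = 0)
    (β h : ℝ) (hβ : 0 ≤ β) :
    ∃ Fann : ℝ, Tendsto (fun N : ℕ => Real.log (Zfun P T ρ β h N) / N)
      atTop (nhds Fann) :=
  annealed_free_energy_exists_general P T hmeas hindep hident K hK0 hKpos hlaw q ρ hρ β h
end

section
/- Let μ* be the invariant probability measure of the finite irreducible stochastic matrix Q̃*_β(s̄*,t̄*) = Q*_β(s̄*,t̄*) ν*(t̄*)/(λ(β) ν*(s̄*)). Define μ on (ℕ*)^q by μ(t̄) = μ*(t̄*) ∏_{j=0}^{q−1} K(t_j)/K(t*_j). Then μ is a probability measure and is invariant for the kernel Q̃_β. -/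
/-!
Given its truncation `t̄* = u`, the weight `μ` makes the coordinates of `t̄` independent, the
`j`-th with law `K(t)/K(u_j)` on the fibre of `u_j` under truncation, which has total mass one.
So `μ` is the mixture with weights `μ*(u)` of product probabilities, hence a probability.
For invariance, the shift structure of `Q_β` forces `s̄ = (m, t_0, …, t_{q−2})`, and on such `s̄`
the kernel `Q_β` is `Q*_β` of the truncations times `K(t_{q−1})/K(t*_{q−1})`. Summing over `m`
fibre by fibre therefore collapses the invariance equation for `μ` at `t̄` to the one for `μ*`
at `t̄*`.
-/

open scoped Classical
open Filter Matrix

/-- `K(⋆) = ∑_{n>q} K(n)` for the cemetery state `0`; `K(e)` for `e ∈ {1,…,q}`.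
States in `Fin (q+1)`: `0` is the cemetery state `⋆`, and `e ≥ 1` codes a jump of size `e`. -/
noncomputable def Kstar (q : ℕ) (K : ℕ → ℝ) (e : Fin (q + 1)) : ℝ :=
  if e.1 = 0 then ∑' n : ℕ, K (n + q + 1) else K e.1

/-- `G(t̄*) = ∑_{k=0}^{q−1} ρ_{t*_0+⋯+t*_k}` with the conventions `ρ_⋆ = 0`, `⋆ + t = ⋆`. -/
noncomputable def Gfun (q : ℕ) (ρ : ℕ → ℝ) (t : Fin q → Fin (q + 1)) : ℝ :=
  ∑ k : Fin q, if ∀ j, j ≤ k → (t j).1 ≠ 0 then ρ (∑ j ∈ Finset.Iic k, (t j).1) else 0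

/-- Last coordinate `t_{q−1}` of a `q`-tuple. -/
noncomputable def lastE {q : ℕ} (t : Fin q → Fin (q + 1)) : Fin (q + 1) :=
  if h : 0 < q then t ⟨q - 1, by omega⟩ else 0

/-- The shift consistency condition `s_i = t_{i−1}` for `1 ≤ i ≤ q−1`. -/
def shiftOK {q : ℕ} (s t : Fin q → Fin (q + 1)) : Prop :=
  ∀ i : Fin q, 1 ≤ i.1 → s i = t ⟨i.1 - 1, lt_of_le_of_lt (Nat.sub_le _ _) i.isLt⟩

/-- The transfer matrix `Q*_β` on `E^q`, `E = {1,…,q,⋆}`: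
`Q*_β(s̄*,t̄*) = e^{β²G(t̄*)} (K(t*_{q−1})/(1−K(∞))) ∏_{i=1}^{q−1} 1_{s*_i=t*_{i−1}}`. -/
noncomputable def Qmat (q : ℕ) (β : ℝ) (K ρ : ℕ → ℝ) (Kinf : ℝ) :
    Matrix (Fin q → Fin (q + 1)) (Fin q → Fin (q + 1)) ℝ := fun s t =>
  Real.exp (β ^ 2 * Gfun q ρ t) * (Kstar q K (lastE t) / (1 - Kinf)) *
    (if shiftOK s t then 1 else 0)

/-- A nonnegative matrix is irreducible if some power connects any two indices. -/
def MatIrreducible {n : Type*} [Fintype n] [DecidableEq n] (A : Matrix n n ℝ) : Prop :=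
  ∀ i j, ∃ k : ℕ, 0 < k ∧ 0 < (A ^ k) i j

/-- A nonnegative matrix is primitive if some power has all entries positive. -/
def MatPrimitive {n : Type*} [Fintype n] [DecidableEq n] (A : Matrix n n ℝ) : Prop :=
  ∃ k : ℕ, 0 < k ∧ ∀ i j, 0 < (A ^ k) i j

/-- Truncation `t ↦ t*`: values in `{1,…,q}` are kept, larger values are sent to `⋆ = 0`. -/
noncomputable def truncF (q : ℕ) (t : ℕ) : Fin (q + 1) :=
  if h : 1 ≤ t ∧ t ≤ q then ⟨t, by omega⟩ else 0

/-- Componentwise truncation `t̄ ↦ t̄*`. -/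
noncomputable def truncT (q : ℕ) (t : Fin q → ℕ) : Fin q → Fin (q + 1) :=
  fun i => truncF q (t i)

/-- `G(t̄) = ∑_{k=0}^{q−1} ρ_{t_0+⋯+t_k}` for a tuple of (finite) inter-arrival times. -/
noncomputable def Gnat (q : ℕ) (ρ : ℕ → ℝ) (t : Fin q → ℕ) : ℝ :=
  ∑ k : Fin q, ρ (∑ j ∈ Finset.Iic k, t j)

/-- Last coordinate `t_{q−1}`. -/
noncomputable def lastN {q : ℕ} (t : Fin q → ℕ) : ℕ :=
  if h : 0 < q then t ⟨q - 1, by omega⟩ else 0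

/-- The shift consistency condition for tuples in `(ℕ*)^q`. -/
def shiftOKN {q : ℕ} (s t : Fin q → ℕ) : Prop :=
  ∀ i : Fin q, 1 ≤ i.1 → s i = t ⟨i.1 - 1, lt_of_le_of_lt (Nat.sub_le _ _) i.isLt⟩

/-- The countable-state kernel
`Q_β(s̄,t̄) = e^{β²G(t̄)} (K(t_{q−1})/(1−K(∞))) ∏_{i=1}^{q−1} 1_{s_i=t_{i−1}}` on `(ℕ*)^q`. -/
noncomputable def Qker (q : ℕ) (β : ℝ) (K ρ : ℕ → ℝ) (Kinf : ℝ)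
    (s t : Fin q → ℕ) : ℝ :=
  Real.exp (β ^ 2 * Gnat q ρ t) * (K (lastN t) / (1 - Kinf)) *
    (if shiftOKN s t then 1 else 0)

theorem HasSum.mul_of_nonneg {ι ι' : Type*} {f : ι → ℝ} {g : ι' → ℝ} {a b : ℝ}
    (hf : HasSum f a) (hg : HasSum g b) (hf0 : 0 ≤ f) (hg0 : 0 ≤ g) :
    HasSum (fun x : ι × ι' => f x.1 * g x.2) (a * b) :=
  hf.mul hg (hf.summable.mul_of_nonneg hg.summable hf0 hg0)

theorem hasSum_fin_prod {α : Type*} {n : ℕ} {f : Fin n → α → ℝ} {a : Fin n → ℝ}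
    (hf0 : ∀ j x, 0 ≤ f j x) (hf : ∀ j, HasSum (f j) (a j)) :
    HasSum (fun t : Fin n → α => ∏ j, f j (t j)) (∏ j, a j) := by
  induction n with
  | zero => simp
  | succ n ih =>
    have htail : HasSum (fun t : Fin n → α => ∏ j, f j.succ (t j)) (∏ j : Fin n, a j.succ) :=
      ih (fun j x => hf0 j.succ x) (fun j => hf j.succ)
    have hcons : (fun t : Fin (n + 1) → α => ∏ j, f j (t j)) ∘ Fin.consEquiv (fun _ => α) =
        fun p => f 0 p.1 * ∏ j, f j.succ (p.2 j) := by
      funext p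
      simp [Fin.prod_univ_succ]
    have htail0 : 0 ≤ fun t : Fin n → α => ∏ j, f j.succ (t j) :=
      fun t => Finset.prod_nonneg fun j _ => hf0 j.succ (t j)
    have hpair := (hf 0).mul_of_nonneg htail (hf0 0) htail0
    rwa [Fin.prod_univ_succ, ← (Fin.consEquiv fun _ => α).hasSum_iff, hcons]

theorem tsum_eq_tsum_cons {α M : Type*} [AddCommMonoid M] [TopologicalSpace M] {n : ℕ}
    (f : (Fin (n + 1) → α) → M) (w : Fin n → α) (hf : ∀ u, f u ≠ 0 → u = Fin.cons (u 0) w) :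
    ∑' u, f u = ∑' e, f (Fin.cons e w) :=
  ((Fin.cons_left_injective w).tsum_eq fun u hu => ⟨u 0, (hf u hu).symm⟩).symm

theorem shift_iff_eq_cons {α : Type*} {n : ℕ} (s t : Fin (n + 1) → α) :
    (∀ i : Fin (n + 1), 1 ≤ i.1 → s i = t ⟨i.1 - 1, lt_of_le_of_lt (Nat.sub_le _ _) i.isLt⟩) ↔
      s = Fin.cons (s 0) (Fin.init t) := by
  constructor
  · intro h
    funext i
    cases i using Fin.cases with
    | zero => rfl
    | succ j => exact h j.succ (by simp)
  · intro h i hi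
    obtain ⟨j, rfl⟩ : ∃ j : Fin n, i = j.succ := ⟨⟨i.1 - 1, by omega⟩, Fin.ext (by simp; omega)⟩
    rw [h]
    rfl

theorem shiftOKN_iff {n : ℕ} {s t : Fin (n + 1) → ℕ} :
    shiftOKN s t ↔ s = Fin.cons (s 0) (Fin.init t) :=
  shift_iff_eq_cons s t

theorem shiftOK_iff {n : ℕ} {s t : Fin (n + 1) → Fin (n + 1 + 1)} :
    shiftOK s t ↔ s = Fin.cons (s 0) (Fin.init t) :=
  shift_iff_eq_cons s t

theorem shiftOK_truncT {q : ℕ} {s t : Fin q → ℕ} (h : shiftOKN s t) :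
    shiftOK (truncT q s) (truncT q t) :=
  fun i hi => congrArg (truncF q) (h i hi)

theorem val_truncF {q n : ℕ} (h1 : 1 ≤ n) (h2 : n ≤ q) : (truncF q n : ℕ) = n := by
  simp [truncF, h1, h2]

theorem truncF_of_lt {q n : ℕ} (h : q < n) : truncF q n = 0 := by
  simp [truncF]
  omega

theorem truncF_eq_zero_iff {q n : ℕ} (hn : 1 ≤ n) : truncF q n = 0 ↔ q < n := by
  refine ⟨fun h => ?_, truncF_of_lt⟩
  by_contra hle
  have := congrArg Fin.val h
  rw [val_truncF hn (not_lt.mp hle)] at this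
  simp at this
  omega

theorem truncF_eq_iff_of_ne_zero {q n : ℕ} {e : Fin (q + 1)} (he : e ≠ 0) (hn : 1 ≤ n) :
    truncF q n = e ↔ n = e := by
  constructor
  · rintro rfl
    have hnq : n ≤ q := not_lt.mp fun h => he (truncF_of_lt h)
    exact (val_truncF hn hnq).symm
  · rintro rfl
    exact Fin.ext (val_truncF hn (Nat.lt_succ_iff.mp e.isLt))

theorem lastE_truncT (q : ℕ) (t : Fin q → ℕ) : lastE (truncT q t) = truncF q (lastN t) := by
  unfold lastE lastN
  split_ifs <;> simp [truncT, truncF]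

theorem truncT_cons_init {n : ℕ} (m : ℕ) (t : Fin (n + 1) → ℕ) :
    truncT (n + 1) (Fin.cons m (Fin.init t)) =
      Fin.cons (truncF (n + 1) m) (Fin.init (truncT (n + 1) t)) := by
  funext i
  cases i using Fin.cases <;> rfl

theorem lastN_eq_apply_last {n : ℕ} (t : Fin (n + 1) → ℕ) : lastN t = t (Fin.last n) := by
  simp [lastN, Fin.last]

section Lift

variable {q : ℕ} {K : ℕ → ℝ}

theorem summable_K_tail (hKsum : Summable K) : Summable fun n => K (n + q + 1) :=
  hKsum.comp_injective fun a b h => by simpa using h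

theorem Kstar_pos (hKpos : ∀ n, 1 ≤ n → 0 < K n) (hKsum : Summable K) (e : Fin (q + 1)) :
    0 < Kstar q K e := by
  unfold Kstar
  split_ifs with he
  · exact (summable_K_tail hKsum).tsum_pos (fun n => (hKpos _ (by omega)).le) 0
      (hKpos _ (by omega))
  · exact hKpos _ (by omega)

theorem hasSum_K_fiber (hKsum : Summable K) (e : Fin (q + 1)) :
    HasSum (fun n => if 1 ≤ n ∧ truncF q n = e then K n else 0) (Kstar q K e) := by
  by_cases he : e = 0
  · subst he
    have hinj : Function.Injective fun n : ℕ => n + q + 1 := fun a b h => by simpa using h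
    rw [← hinj.hasSum_iff]
    · convert (summable_K_tail (q := q) hKsum).hasSum using 1
      · funext n
        simp [truncF_of_lt (show q < n + q + 1 by omega)]
      · simp [Kstar]
    · intro n hn
      rw [if_neg]
      rintro ⟨h1, h2⟩
      exact hn ⟨n - q - 1, by have := (truncF_eq_zero_iff h1).mp h2; simp; omega⟩
  · have hfib : ∀ n, (1 ≤ n ∧ truncF q n = e) ↔ n = e := fun n =>
      ⟨fun h => (truncF_eq_iff_of_ne_zero he h.1).mp h.2, fun h =>
        have h1 : 1 ≤ n := h ▸ Nat.one_le_iff_ne_zero.mpr (Fin.val_ne_zero_iff.mpr he)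
        ⟨h1, (truncF_eq_iff_of_ne_zero he h1).mpr h⟩⟩
    simp only [hfib, Kstar, Fin.val_eq_zero_iff, he, if_false]
    convert hasSum_ite_eq (e : ℕ) (K e) using 2 with n
    split_ifs with h <;> simp [h]

theorem Kstar_nonneg (hK : ∀ n, 1 ≤ n → 0 ≤ K n) (e : Fin (q + 1)) : 0 ≤ Kstar q K e := by
  unfold Kstar
  split_ifs with he
  · exact tsum_nonneg fun n => hK _ (by omega)
  · exact hK _ (by omega)

/-- The conditional law of a coordinate `t ≥ 1` given its truncation `t* = e`. -/
noncomputable def truncCondLaw (q : ℕ) (K : ℕ → ℝ) (e : Fin (q + 1)) (n : ℕ) : ℝ :=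
  if 1 ≤ n ∧ truncF q n = e then K n / Kstar q K e else 0

theorem truncCondLaw_nonneg (hK : ∀ n, 1 ≤ n → 0 ≤ K n) (e : Fin (q + 1)) (n : ℕ) :
    0 ≤ truncCondLaw q K e n := by
  unfold truncCondLaw
  split_ifs with h
  · exact div_nonneg (hK n h.1) (Kstar_nonneg hK e)
  · exact le_rfl

theorem hasSum_truncCondLaw (hKpos : ∀ n, 1 ≤ n → 0 < K n) (hKsum : Summable K)
    (e : Fin (q + 1)) : HasSum (truncCondLaw q K e) 1 := by
  have h := (hasSum_K_fiber hKsum e).div_const (Kstar q K e)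
  have hlaw : truncCondLaw q K e =
      fun n => (if 1 ≤ n ∧ truncF q n = e then K n else 0) / Kstar q K e := by
    funext n
    unfold truncCondLaw
    split_ifs <;> simp
  rwa [hlaw, ← div_self (Kstar_pos hKpos hKsum e).ne']

noncomputable def liftMeasure (q : ℕ) (K : ℕ → ℝ) (μs : (Fin q → Fin (q + 1)) → ℝ)
    (t : Fin q → ℕ) : ℝ :=
  μs (truncT q t) * ∏ j, K (t j) / Kstar q K (truncF q (t j))

theorem liftMeasure_nonneg (hK : ∀ n, 1 ≤ n → 0 ≤ K n) {μs : (Fin q → Fin (q + 1)) → ℝ}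
    (hμs : ∀ u, 0 ≤ μs u) {t : Fin q → ℕ} (ht : ∀ i, 1 ≤ t i) : 0 ≤ liftMeasure q K μs t :=
  mul_nonneg (hμs _) (Finset.prod_nonneg fun j _ => div_nonneg (hK _ (ht j)) (Kstar_nonneg hK _))

theorem prod_truncCondLaw (u : Fin q → Fin (q + 1)) (t : Fin q → ℕ) :
    ∏ j, truncCondLaw q K (u j) (t j) =
      if (∀ i, 1 ≤ t i) ∧ truncT q t = u then ∏ j, K (t j) / Kstar q K (truncF q (t j))
      else 0 := by
  by_cases h : (∀ i, 1 ≤ t i) ∧ truncT q t = u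
  · obtain ⟨ht, rfl⟩ := h
    rw [if_pos ⟨ht, rfl⟩]
    exact Finset.prod_congr rfl fun j _ => if_pos ⟨ht j, rfl⟩
  · obtain ⟨j, hj⟩ : ∃ j, ¬(1 ≤ t j ∧ truncF q (t j) = u j) := by
      by_contra! hall
      exact h ⟨fun i => (hall i).1, funext fun i => (hall i).2⟩
    rw [if_neg h]
    exact Finset.prod_eq_zero (Finset.mem_univ j) (if_neg hj)

theorem sum_mul_prod_truncCondLaw (μs : (Fin q → Fin (q + 1)) → ℝ) (t : Fin q → ℕ) :
    ∑ u, μs u * ∏ j, truncCondLaw q K (u j) (t j) =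
      if ∀ i, 1 ≤ t i then liftMeasure q K μs t else 0 := by
  by_cases ht : ∀ i, 1 ≤ t i <;> simp [prod_truncCondLaw, ht, liftMeasure]

theorem hasSum_liftMeasure (hKpos : ∀ n, 1 ≤ n → 0 < K n) (hKsum : Summable K)
    (μs : (Fin q → Fin (q + 1)) → ℝ) :
    HasSum (fun t => if ∀ i, 1 ≤ t i then liftMeasure q K μs t else 0) (∑ u, μs u) := by
  simp_rw [← sum_mul_prod_truncCondLaw]
  refine hasSum_sum fun u _ => ?_
  have hprod := hasSum_fin_prod (fun j => truncCondLaw_nonneg (fun n hn => (hKpos n hn).le) (u j))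
    fun j => hasSum_truncCondLaw hKpos hKsum (u j)
  simpa using hprod.mul_left (μs u)

end Lift

noncomputable def doobTransform {α : Type*} (A : α → α → ℝ) (h : α → ℝ) (c : ℝ) (x y : α) : ℝ :=
  A x y * h y / (c * h x)

/-- A partial sum that passes through `⋆` exceeds `q`, where `ρ` vanishes. -/
theorem Gfun_truncT {q : ℕ} {ρ : ℕ → ℝ} (hρ : ∀ k, q < k → ρ k = 0) {t : Fin q → ℕ}
    (ht : ∀ i, 1 ≤ t i) : Gfun q ρ (truncT q t) = Gnat q ρ t := by
  refine Finset.sum_congr rfl fun k _ => ?_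
  by_cases hk : ∀ j, j ≤ k → t j ≤ q
  · rw [if_pos fun j hj => by simp only [truncT, val_truncF (ht j) (hk j hj)]; have := ht j; omega]
    exact congrArg ρ (Finset.sum_congr rfl fun j hj =>
      val_truncF (ht j) (hk j (Finset.mem_Iic.mp hj)))
  · push Not at hk
    obtain ⟨j, hjk, hj⟩ := hk
    rw [if_neg fun h => h j hjk (by simp [truncT, truncF_of_lt hj]), hρ]
    exact hj.trans_le (Finset.single_le_sum (fun i _ => Nat.zero_le _) (Finset.mem_Iic.mpr hjk))

section Kernels

variable {q : ℕ} {β : ℝ} {K ρ : ℕ → ℝ} {Kinf : ℝ}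

theorem Qker_of_not_shiftOKN {s t : Fin q → ℕ} (h : ¬shiftOKN s t) :
    Qker q β K ρ Kinf s t = 0 := by
  simp [Qker, h]

theorem Qmat_of_not_shiftOK {u v : Fin q → Fin (q + 1)} (h : ¬shiftOK u v) :
    Qmat q β K ρ Kinf u v = 0 := by
  simp [Qmat, h]

theorem Qker_eq_Qmat_mul (hρ : ∀ k, q < k → ρ k = 0) {s t : Fin q → ℕ} (ht : ∀ i, 1 ≤ t i)
    (hst : shiftOKN s t) (hK : Kstar q K (truncF q (lastN t)) ≠ 0) :
    Qker q β K ρ Kinf s t = Qmat q β K ρ Kinf (truncT q s) (truncT q t) *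
      (K (lastN t) / Kstar q K (truncF q (lastN t))) := by
  rw [Qker, Qmat, if_pos hst, if_pos (shiftOK_truncT hst), Gfun_truncT hρ ht, lastE_truncT]
  field_simp

end Kernels

section Invariance

variable {n : ℕ} {β : ℝ} {K ρ : ℕ → ℝ} {Kinf lam : ℝ}
  {μs νs : (Fin (n + 1) → Fin (n + 1 + 1)) → ℝ}

theorem sum_cons_init_doob_Qmat
    (hμsinv : ∀ v, ∑ u, μs u * doobTransform (Qmat (n + 1) β K ρ Kinf) νs lam u v = μs v)
    (v : Fin (n + 1) → Fin (n + 1 + 1)) :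
    ∑ e, μs (Fin.cons e (Fin.init v)) *
      doobTransform (Qmat (n + 1) β K ρ Kinf) νs lam (Fin.cons e (Fin.init v)) v = μs v := by
  have hcons := tsum_eq_tsum_cons
    (fun u => μs u * doobTransform (Qmat (n + 1) β K ρ Kinf) νs lam u v) (Fin.init v)
    fun u hu => shiftOK_iff.mp <| by
      by_contra h
      simp [doobTransform, Qmat_of_not_shiftOK h] at hu
  rwa [tsum_fintype, tsum_fintype, hμsinv, eq_comm] at hcons

theorem liftMeasure_cons_init_mul_doob (hKpos : ∀ n, 1 ≤ n → 0 < K n) (hKsum : Summable K)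
    (hρ : ∀ k, n + 1 < k → ρ k = 0) {t : Fin (n + 1) → ℕ} (ht : ∀ i, 1 ≤ t i) (m : ℕ) :
    (if ∀ i, 1 ≤ (Fin.cons m (Fin.init t) : Fin (n + 1) → ℕ) i then
        liftMeasure (n + 1) K μs (Fin.cons m (Fin.init t)) *
          doobTransform (Qker (n + 1) β K ρ Kinf) (νs ∘ truncT (n + 1)) lam
            (Fin.cons m (Fin.init t)) t
      else 0) =
      ∑ e, truncCondLaw (n + 1) K e m *
        (μs (Fin.cons e (Fin.init (truncT (n + 1) t))) *
          doobTransform (Qmat (n + 1) β K ρ Kinf) νs lam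
            (Fin.cons e (Fin.init (truncT (n + 1) t))) (truncT (n + 1) t) *
          ∏ j, K (t j) / Kstar (n + 1) K (truncF (n + 1) (t j))) := by
  by_cases hm : 1 ≤ m
  · have hall : ∀ i, 1 ≤ (Fin.cons m (Fin.init t) : Fin (n + 1) → ℕ) i :=
      fun i => Fin.cases hm (fun j => ht _) i
    have hshift : shiftOKN (Fin.cons m (Fin.init t)) t := shiftOKN_iff.mpr rfl
    rw [if_pos hall, Finset.sum_eq_single (truncF (n + 1) m), truncCondLaw, if_pos ⟨hm, rfl⟩,
      doobTransform,
      Qker_eq_Qmat_mul hρ ht hshift (Kstar_pos hKpos hKsum _).ne', liftMeasure,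
      Function.comp_apply, Function.comp_apply, truncT_cons_init, Fin.prod_univ_succ,
      Fin.prod_univ_castSucc, lastN_eq_apply_last]
    · simp only [Fin.cons_zero, Fin.cons_succ, Fin.init, doobTransform]
      ring
    · intro e _ he
      rw [truncCondLaw, if_neg fun h => he h.2.symm, zero_mul]
    · simp
  · rw [if_neg fun h => hm (h 0), eq_comm]
    exact Finset.sum_eq_zero fun e _ => by rw [truncCondLaw, if_neg fun h => hm h.1, zero_mul]

theorem tsum_liftMeasure_mul_doob_Qker (hKpos : ∀ n, 1 ≤ n → 0 < K n) (hKsum : Summable K)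
    (hρ : ∀ k, n + 1 < k → ρ k = 0)
    (hμsinv : ∀ v, ∑ u, μs u * doobTransform (Qmat (n + 1) β K ρ Kinf) νs lam u v = μs v)
    {t : Fin (n + 1) → ℕ} (ht : ∀ i, 1 ≤ t i) :
    ∑' s, (if ∀ i, 1 ≤ s i then
        liftMeasure (n + 1) K μs s *
          doobTransform (Qker (n + 1) β K ρ Kinf) (νs ∘ truncT (n + 1)) lam s t
      else 0) = liftMeasure (n + 1) K μs t := by
  have hsupp : ∀ s, (if ∀ i, 1 ≤ s i then liftMeasure (n + 1) K μs s *
      doobTransform (Qker (n + 1) β K ρ Kinf) (νs ∘ truncT (n + 1)) lam s t else 0) ≠ 0 →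
      s = Fin.cons (s 0) (Fin.init t) := fun s hs => shiftOKN_iff.mp <| by
    by_contra h
    simp [doobTransform, Qker_of_not_shiftOKN h] at hs
  rw [tsum_eq_tsum_cons _ _ hsupp]
  simp_rw [liftMeasure_cons_init_mul_doob hKpos hKsum hρ ht]
  have hmix := hasSum_sum fun e (_ : e ∈ Finset.univ) =>
    (hasSum_truncCondLaw hKpos hKsum e).mul_right
      (μs (Fin.cons e (Fin.init (truncT (n + 1) t))) *
        doobTransform (Qmat (n + 1) β K ρ Kinf) νs lam
          (Fin.cons e (Fin.init (truncT (n + 1) t))) (truncT (n + 1) t) *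
        ∏ j, K (t j) / Kstar (n + 1) K (truncF (n + 1) (t j)))
  rw [hmix.tsum_eq]
  simp only [one_mul, ← Finset.sum_mul, sum_cons_init_doob_Qmat hμsinv, liftMeasure]

end Invariance

theorem invariant_measure_lift_general
    (q : ℕ) (hq : 1 ≤ q) (K : ℕ → ℝ)
    (hKpos : ∀ n, 1 ≤ n → 0 < K n) (hKsum : Summable K)
    (Kinf : ℝ)
    (ρ : ℕ → ℝ) (hρ : ∀ k, q < k → ρ k = 0) (β : ℝ)
    (lam : ℝ) (νs : (Fin q → Fin (q + 1)) → ℝ)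
    (μs : (Fin q → Fin (q + 1)) → ℝ) (hμs0 : ∀ u, 0 ≤ μs u)
    (hμs1 : ∑ u : Fin q → Fin (q + 1), μs u = 1)
    (hμsinv : ∀ v : Fin q → Fin (q + 1),
      ∑ u : Fin q → Fin (q + 1),
        μs u * (Qmat q β K ρ Kinf u v * νs v / (lam * νs u)) = μs v)
    (μ : (Fin q → ℕ) → ℝ)
    (hμ : ∀ t : Fin q → ℕ,
      μ t = μs (truncT q t) * ∏ j : Fin q, K (t j) / Kstar q K (truncF q (t j))) :
    (∀ t : Fin q → ℕ, (∀ i, 1 ≤ t i) → 0 ≤ μ t) ∧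
    (∑' t : (Fin q → ℕ), (if ∀ i, 1 ≤ t i then μ t else 0)) = 1 ∧
    (∀ t : Fin q → ℕ, (∀ i, 1 ≤ t i) →
      (∑' s : (Fin q → ℕ),
        (if ∀ i, 1 ≤ s i then
          μ s * (Qker q β K ρ Kinf s t * νs (truncT q t) / (lam * νs (truncT q s)))
         else 0)) = μ t) := by
  obtain ⟨n, rfl⟩ : ∃ n, q = n + 1 := ⟨q - 1, by omega⟩
  obtain rfl : μ = liftMeasure (n + 1) K μs := funext hμ
  refine ⟨fun t ht => liftMeasure_nonneg (fun k hk => (hKpos k hk).le) hμs0 ht, ?_,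
    fun t ht => tsum_liftMeasure_mul_doob_Qker hKpos hKsum hρ hμsinv ht⟩
  rw [(hasSum_liftMeasure hKpos hKsum μs).tsum_eq, hμs1]

/-- The invariant probability of the finite Doob-transformed chain `Q̃*_β` lifts to an
invariant probability `μ(t̄) = μ*(t̄*) ∏_j K(t_j)/K(t*_j)` of the countable-state kernel
`Q̃_β(s̄,t̄) = Q_β(s̄,t̄)ν(t̄)/(λ(β)ν(s̄))`. -/
theorem invariant_measure_lift
    (q : ℕ) (hq : 1 ≤ q) (K : ℕ → ℝ) (hK0 : K 0 = 0)
    (hKpos : ∀ n, 1 ≤ n → 0 < K n) (hKsum : Summable K)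
    (Kinf : ℝ) (hKinf : Kinf = 1 - ∑' n : ℕ, K (n + 1))
    (hKinf0 : 0 ≤ Kinf) (hKinf1 : Kinf < 1)
    (ρ : ℕ → ℝ) (hρ : ∀ k, q < k → ρ k = 0) (β : ℝ)
    (lam : ℝ) (hlam : 0 < lam) (νs : (Fin q → Fin (q + 1)) → ℝ)
    (hνpos : ∀ u, 0 < νs u)
    (heig : Qmat q β K ρ Kinf *ᵥ νs = lam • νs)
    (μs : (Fin q → Fin (q + 1)) → ℝ) (hμs0 : ∀ u, 0 ≤ μs u)
    (hμs1 : ∑ u : Fin q → Fin (q + 1), μs u = 1)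
    (hμsinv : ∀ v : Fin q → Fin (q + 1),
      ∑ u : Fin q → Fin (q + 1),
        μs u * (Qmat q β K ρ Kinf u v * νs v / (lam * νs u)) = μs v)
    (μ : (Fin q → ℕ) → ℝ)
    (hμ : ∀ t : Fin q → ℕ,
      μ t = μs (truncT q t) * ∏ j : Fin q, K (t j) / Kstar q K (truncF q (t j))) :
    (∀ t : Fin q → ℕ, (∀ i, 1 ≤ t i) → 0 ≤ μ t) ∧
    (∑' t : (Fin q → ℕ), (if ∀ i, 1 ≤ t i then μ t else 0)) = 1 ∧
    (∀ t : Fin q → ℕ, (∀ i, 1 ≤ t i) →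
      (∑' s : (Fin q → ℕ),
        (if ∀ i, 1 ≤ s i then
          μ s * (Qker q β K ρ Kinf s t * νs (truncT q t) / (lam * νs (truncT q s)))
         else 0)) = μ t) :=
  invariant_measure_lift_general q hq K hKpos hKsum Kinf ρ hρ β lam νs μs hμs0 hμs1 hμsinv μ hμ
end

section
/- Let P be a primitive stochastic matrix on a finite set S, and Com(P−Id) the cofactor matrix of P − Id. Then Tr(Com(P−Id)) ≠ 0, and for every s ∈ S, Tr(ᵗCom(P−Id)·P^{(s)}) / Tr(ᵗCom(P−Id)) = π(s), where P^{(s)}(i,j) = P(i,j)·1_{j=s} and π is the unique invariant probability measure of P. -/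
/-!
Since `P *ᵥ 1 = 1`, `det (P - 1) = 0`, so `A := adjugate (P - 1)` satisfies
`A * P = A = P * A`. Because some power of `P` is entrywise positive, a maximum principle shows
that vectors fixed by `P` on the right are constant and vectors fixed on the left with zero sum
vanish. Hence the columns of `A` are constant and its common row is proportional to `π`, i.e.
`A i j = Tr A * π j`; then `Tr (A * P^{(s)}) = (A * P) s s = A s s = Tr A * π s`.
Finally `Tr A ≠ 0`: taking `π s ≠ 0`, a vanishing cofactor `A s s` would give a nonzero `v`
with `v s = 0` and `(P - 1) *ᵥ v` supported at `s`; pairing with `π` forces `(P - 1) *ᵥ v = 0`,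
so `v` is constant, hence zero.
-/

open Matrix Finset

namespace Matrix

variable {S : Type*} [Fintype S]

section Semiring

variable {R : Type*} [Semiring R] {P : Matrix S S R} {v : S → R}

theorem pow_mulVec_eq_self [DecidableEq S] (h : P *ᵥ v = v) (k : ℕ) : P ^ k *ᵥ v = v := by
  induction k with
  | zero => exact one_mulVec v
  | succ k ih => rw [pow_succ, ← mulVec_mulVec, h, ih]

theorem vecMul_pow_eq_self [DecidableEq S] (h : v ᵥ* P = v) (k : ℕ) : v ᵥ* P ^ k = v := by
  induction k with
  | zero => exact vecMul_one v
  | succ k ih => rw [pow_succ, ← vecMul_vecMul, ih, h]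

theorem trace_mul_of_apply_mul_ite [DecidableEq S] (A B : Matrix S S R) (s : S) :
    trace (A * of fun i j => B i j * if j = s then 1 else 0) = (A * B) s s := by
  simp [trace, mul_apply]

end Semiring

section OrderedField

variable {K : Type*} [Field K] [LinearOrder K] [IsStrictOrderedRing K] {Q : Matrix S S K}
  {v : S → K}

theorem vecMul_eq_self_of_le_vecMul (hQ : Q *ᵥ 1 = 1) (hv : v ≤ v ᵥ* Q) : v ᵥ* Q = v := by
  have hsum : ∑ i, v i = ∑ i, (v ᵥ* Q) i := by
    rw [← dotProduct_one, ← dotProduct_one, ← dotProduct_mulVec, hQ]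
  exact funext fun j => ((sum_eq_sum_iff_of_le fun i _ => hv i).mp hsum j (mem_univ j)).symm

theorem apply_eq_of_mulVec_eq_self_of_pos (hpos : ∀ i j, 0 < Q i j) (hQ : Q *ᵥ 1 = 1)
    (hv : Q *ᵥ v = v) (i j : S) : v i = v j := by
  obtain ⟨m, -, hm⟩ := exists_max_image univ v ⟨i, mem_univ i⟩
  have hle : ∀ b ∈ univ, Q m b * v b ≤ Q m b * v m := fun b _ =>
    mul_le_mul_of_nonneg_left (hm b (mem_univ b)) (hpos m b).le
  have hsum : ∑ b, Q m b * v b = ∑ b, Q m b * v m := by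
    have := congrFun hQ m
    simp only [mulVec, dotProduct, Pi.one_apply, mul_one] at this
    rw [← sum_mul, this, one_mul]
    exact congrFun hv m
  have heq (a : S) : v a = v m :=
    mul_left_cancel₀ (hpos m a).ne' ((sum_eq_sum_iff_of_le hle).mp hsum a (mem_univ a))
  rw [heq i, heq j]

theorem eq_zero_of_vecMul_eq_self_of_pos (hpos : ∀ i j, 0 < Q i j) (hQ : Q *ᵥ 1 = 1)
    (hv : v ᵥ* Q = v) (hsum : ∑ i, v i = 0) : v = 0 := by
  -- The positive part `w` of `v` is subinvariant, hence invariant, so a negative entry of `v`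
  -- would force `w = 0`.
  set w : S → K := fun i => max (v i) 0
  have hw : w ᵥ* Q = w := by
    refine vecMul_eq_self_of_le_vecMul hQ fun j => max_le ?_ ?_
    · calc v j = (v ᵥ* Q) j := (congrFun hv j).symm
        _ ≤ (w ᵥ* Q) j := sum_le_sum fun i _ =>
          mul_le_mul_of_nonneg_right (le_max_left _ _) (hpos i j).le
    · exact sum_nonneg fun i _ => mul_nonneg (le_max_right _ _) (hpos i j).le
  have hnonneg : ∀ i, 0 ≤ v i := by
    by_contra! ⟨q, hq⟩
    have hwq : ∑ i, w i * Q i q = 0 := (congrFun hw q).trans (max_eq_right hq.le)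
    have hnonpos (i : S) : v i ≤ 0 := by
      have := (sum_eq_zero_iff_of_nonneg fun i _ =>
        mul_nonneg (le_max_right (v i) 0) (hpos i q).le).mp hwq i (mem_univ i)
      exact max_eq_right_iff.mp ((mul_eq_zero.mp this).resolve_right (hpos i q).ne')
    exact hq.ne ((sum_eq_zero_iff_of_nonpos fun i _ => hnonpos i).mp hsum q (mem_univ q))
  exact funext ((sum_eq_zero_iff_of_nonneg fun i _ => hnonneg i).mp hsum · (mem_univ _))

end OrderedField

section Adjugate

variable [DecidableEq S] {R : Type*} [CommRing R] [IsDomain R] {P : Matrix S S R}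

theorem det_sub_one_eq_zero [Nonempty S] (hP : P *ᵥ 1 = 1) : det (P - 1) = 0 :=
  exists_mulVec_eq_zero_iff.mp ⟨1, one_ne_zero, by rw [sub_mulVec, hP, one_mulVec, sub_self]⟩

theorem adjugate_sub_one_mul_self [Nonempty S] (hP : P *ᵥ 1 = 1) :
    adjugate (P - 1) * P = adjugate (P - 1) := by
  have h := adjugate_mul (P - 1)
  rwa [det_sub_one_eq_zero hP, zero_smul, Matrix.mul_sub, Matrix.mul_one, sub_eq_zero] at h

theorem mul_adjugate_sub_one [Nonempty S] (hP : P *ᵥ 1 = 1) :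
    P * adjugate (P - 1) = adjugate (P - 1) := by
  have h := mul_adjugate (P - 1)
  rwa [det_sub_one_eq_zero hP, zero_smul, Matrix.sub_mul, Matrix.one_mul, sub_eq_zero] at h

theorem adjugate_apply_self_ne_zero {M : Matrix S S R} {s : S} {w : S → R}
    (hw : w ᵥ* M = 0) (hws : w s ≠ 0) (hker : ∀ v, M *ᵥ v = 0 → v s = 0 → v = 0) :
    adjugate M s s ≠ 0 := by
  rw [adjugate_apply]
  intro hdet
  obtain ⟨v, hv0, hv⟩ := exists_mulVec_eq_zero_iff.mpr hdet
  rw [updateRow_mulVec] at hv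
  have hvs : v s = 0 := by simpa using congrFun hv s
  have hMv (i : S) (hi : i ≠ s) : (M *ᵥ v) i = 0 := by
    simpa [Function.update_of_ne hi] using congrFun hv i
  have hMvs : (M *ᵥ v) s = 0 := by
    have h : w ⬝ᵥ M *ᵥ v = 0 := by rw [dotProduct_mulVec, hw, zero_dotProduct]
    rw [dotProduct, sum_eq_single s (fun i _ hi => by rw [hMv i hi, mul_zero]) (by simp)] at h
    exact (mul_eq_zero.mp h).resolve_left hws
  refine hv0 (hker v (funext fun i => ?_) hvs)
  obtain rfl | hi := eq_or_ne i s
  exacts [hMvs, hMv i hi]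

end Adjugate

section Primitive

variable [DecidableEq S] {K : Type*} [Field K] [LinearOrder K] [IsStrictOrderedRing K]
  {P : Matrix S S K} {k : ℕ} {π : S → K}

theorem apply_eq_of_mulVec_eq_self_of_pow_pos (hk : ∀ i j, 0 < (P ^ k) i j) (hP : P *ᵥ 1 = 1)
    {v : S → K} (hv : P *ᵥ v = v) (i j : S) : v i = v j :=
  apply_eq_of_mulVec_eq_self_of_pos hk (pow_mulVec_eq_self hP k) (pow_mulVec_eq_self hv k) i j

theorem adjugate_sub_one_apply (hk : ∀ i j, 0 < (P ^ k) i j) (hP : P *ᵥ 1 = 1)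
    (hπ : π ᵥ* P = π) (hπ1 : ∑ s, π s = 1) (i j : S) :
    adjugate (P - 1) i j = trace (adjugate (P - 1)) * π j := by
  have : Nonempty S := ⟨i⟩
  set A := adjugate (P - 1)
  have hcol (i j : S) : A i j = A j j :=
    apply_eq_of_mulVec_eq_self_of_pow_pos hk hP (v := fun m => A m j)
      (funext fun m => congrFun (congrFun (mul_adjugate_sub_one hP) m) j) i j
  have hdiag_fixed : diag A ᵥ* P = diag A := by
    rw [show diag A = A i from funext fun j => (hcol i j).symm]
    exact congrFun (adjugate_sub_one_mul_self hP) i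
  have hdiag_eq : diag A = trace A • π := by
    refine sub_eq_zero.mp (eq_zero_of_vecMul_eq_self_of_pos hk (pow_mulVec_eq_self hP k)
      (vecMul_pow_eq_self ?_ k) ?_)
    · rw [sub_vecMul, smul_vecMul, hdiag_fixed, hπ]
    · simp [sum_sub_distrib, ← mul_sum, hπ1, trace]
  rw [hcol i j]
  exact congrFun hdiag_eq j

theorem trace_adjugate_sub_one_ne_zero (hk : ∀ i j, 0 < (P ^ k) i j) (hP : P *ᵥ 1 = 1)
    (hπ : π ᵥ* P = π) (hπ1 : ∑ s, π s = 1) : trace (adjugate (P - 1)) ≠ 0 := by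
  obtain ⟨s, hs⟩ : ∃ s, π s ≠ 0 := by
    by_contra! h
    simp [h] at hπ1
  intro h0
  refine adjugate_apply_self_ne_zero (w := π) ?_ hs (fun v hv hvs => ?_)
    (by rw [adjugate_sub_one_apply hk hP hπ hπ1, h0, zero_mul])
  · rw [vecMul_sub, vecMul_one, hπ, sub_self]
  · rw [sub_mulVec, one_mulVec, sub_eq_zero] at hv
    exact funext fun i => (apply_eq_of_mulVec_eq_self_of_pow_pos hk hP hv i s).trans hvs

end Primitive

end Matrix

theorem cofactor_invariant_measure_general
    {S : Type*} [Fintype S] [DecidableEq S]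
    (P : Matrix S S ℝ)
    (hstoch : ∀ i, ∑ j, P i j = 1)
    (hprim : ∃ k : ℕ, 0 < k ∧ ∀ i j, 0 < (P ^ k) i j)
    (π : S → ℝ) (hπ1 : ∑ s, π s = 1)
    (hπinv : ∀ j, ∑ i, π i * P i j = π j) :
    Matrix.trace (Matrix.adjugate (P - 1)) ≠ 0 ∧
    ∀ s : S,
      Matrix.trace (Matrix.adjugate (P - 1) *
          Matrix.of (fun i j => P i j * (if j = s then 1 else 0))) /
        Matrix.trace (Matrix.adjugate (P - 1)) = π s := by
  obtain ⟨k, -, hk⟩ := hprim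
  have hP : P *ᵥ 1 = 1 := funext fun i => by simpa [mulVec, dotProduct] using hstoch i
  have hπ : π ᵥ* P = π := funext fun j => by simpa [vecMul, dotProduct] using hπinv j
  have htr := trace_adjugate_sub_one_ne_zero hk hP hπ hπ1
  refine ⟨htr, fun s => ?_⟩
  have : Nonempty S := ⟨s⟩
  rw [trace_mul_of_apply_mul_ite, adjugate_sub_one_mul_self hP,
    adjugate_sub_one_apply hk hP hπ hπ1, mul_div_cancel_left₀ _ htr]

/-- Cofactor formula for the invariant probability of a primitive stochastic matrix:
`Tr(ᵗCom(P−Id)) ≠ 0` and `Tr(ᵗCom(P−Id)·P^{(s)})/Tr(ᵗCom(P−Id)) = π(s)`, where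
`P^{(s)}(i,j) = P(i,j)·1_{j=s}` and `π` is the unique invariant probability of `P`.
(Recall that in Mathlib `adjugate A = ᵗCom(A)`.) -/
theorem cofactor_invariant_measure
    {S : Type*} [Fintype S] [DecidableEq S] [Nonempty S]
    (P : Matrix S S ℝ) (hnonneg : ∀ i j, 0 ≤ P i j)
    (hstoch : ∀ i, ∑ j, P i j = 1)
    (hprim : ∃ k : ℕ, 0 < k ∧ ∀ i j, 0 < (P ^ k) i j)
    (π : S → ℝ) (hπ0 : ∀ s, 0 ≤ π s) (hπ1 : ∑ s, π s = 1)
    (hπinv : ∀ j, ∑ i, π i * P i j = π j) :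
    Matrix.trace (Matrix.adjugate (P - 1)) ≠ 0 ∧
    ∀ s : S,
      Matrix.trace (Matrix.adjugate (P - 1) *
          Matrix.of (fun i j => P i j * (if j = s then 1 else 0))) /
        Matrix.trace (Matrix.adjugate (P - 1)) = π s :=
  cofactor_invariant_measure_general P hstoch hprim π hπ1 hπinv
end
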